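/- arXiv:1710.07502 — 7 statements merged into one kernel-verified Lean document; each statement's English description precedes it below -/
import Mathlib

section
/- Let T be a tree with positive real edge weights and d the induced weighted shortest-path metric on its vertex set X. Say a finite set x ⊆ X is in general position if no three distinct points of x are equidistant from a common point of X. Then for any finite x ⊆ X in general position, every Delaunay clique of x has cardinality at most two; that is, there do not exist three distinct points y₁, y₂, y₃ ∈ x whose Voronoi cells with respect to x pairwise intersect. -/
/-!
Weighted tree metrics satisfy the four-point condition
`d t x + d y z ≤ max (d t y + d x z) (d t z + d x y)`: project `t` and `x` onto the path from `y`
to `z` and compare the order of the two projections along it.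
If `ξ` lies in the cells of `p` and `q`, then `d ξ p = d ξ q`, and general position makes both
strictly smaller than `d ξ r`; the four-point condition at `(ξ, r, p, q)` then gives
`d p q < max (d p r) (d q r)`. For a three-clique this holds for all three pairs, which is
impossible for the pair at largest distance.
-/

/-- Voronoi cell of `y` in the configuration `x` with respect to the distance `d`. -/
def cellD {V : Type*} (d : V → V → ℝ) (x : Finset V) (y : V) : Set V :=
  {ξ | ∀ z ∈ x, d ξ y ≤ d ξ z}

open SimpleGraph

def FourPointCondition {V : Type*} (d : V → V → ℝ) : Prop :=
  ∀ t x y z, d t x + d y z ≤ max (d t y + d x z) (d t z + d x y)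

def GeneralPosition {V : Type*} (d : V → V → ℝ) (x : Finset V) : Prop :=
  ∀ ξ : V, ∀ a ∈ x, ∀ b ∈ x, ∀ c ∈ x, a ≠ b → a ≠ c → b ≠ c →
    ¬(d ξ a = d ξ b ∧ d ξ b = d ξ c)

namespace FourPointCondition

variable {V : Type*} {d : V → V → ℝ}

theorem lt_max_of_eq_of_lt (h : FourPointCondition d) {ξ p q r : V}
    (hpq : d ξ p = d ξ q) (hr : d ξ p < d ξ r) : d p q < max (d r p) (d r q) := by
  rcases le_max_iff.mp (h ξ r p q) with h' | h'
  · exact lt_max_of_lt_right (by linarith)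
  · exact lt_max_of_lt_left (by linarith)

theorem dist_lt_max_of_mem_cellD (h : FourPointCondition d) {x : Finset V}
    (hx : GeneralPosition d x) {p q r ξ : V} (hp : p ∈ x) (hq : q ∈ x) (hr : r ∈ x)
    (hpq : p ≠ q) (hpr : p ≠ r) (hqr : q ≠ r)
    (hξp : ξ ∈ cellD d x p) (hξq : ξ ∈ cellD d x q) : d p q < max (d r p) (d r q) := by
  have heq : d ξ p = d ξ q := le_antisymm (hξp q hq) (hξq p hp)
  have hlt : d ξ p < d ξ r :=
    (hξp r hr).lt_of_ne fun hpr' => hx ξ p hp q hq r hr hpq hpr hqr ⟨heq, heq ▸ hpr'⟩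
  exact h.lt_max_of_eq_of_lt heq hlt

theorem not_exists_three_clique (h : FourPointCondition d) (hsymm : ∀ a b, d a b = d b a)
    {x : Finset V} (hx : GeneralPosition d x) :
    ¬ ∃ y₁ y₂ y₃ : V, y₁ ∈ x ∧ y₂ ∈ x ∧ y₃ ∈ x ∧ y₁ ≠ y₂ ∧ y₁ ≠ y₃ ∧ y₂ ≠ y₃ ∧
      (cellD d x y₁ ∩ cellD d x y₂).Nonempty ∧
      (cellD d x y₁ ∩ cellD d x y₃).Nonempty ∧
      (cellD d x y₂ ∩ cellD d x y₃).Nonempty := by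
  rintro ⟨y₁, y₂, y₃, h₁, h₂, h₃, h₁₂, h₁₃, h₂₃, ⟨ξ₁₂, c₁, c₂⟩, ⟨ξ₁₃, c₁', c₃⟩, ⟨ξ₂₃, c₂', c₃'⟩⟩
  have k₁₂ := h.dist_lt_max_of_mem_cellD hx h₁ h₂ h₃ h₁₂ h₁₃ h₂₃ c₁ c₂
  have k₁₃ := h.dist_lt_max_of_mem_cellD hx h₁ h₃ h₂ h₁₃ h₁₂ h₂₃.symm c₁' c₃
  have k₂₃ := h.dist_lt_max_of_mem_cellD hx h₂ h₃ h₁ h₂₃ h₁₂.symm h₁₃.symm c₂' c₃'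
  rw [hsymm y₃ y₁, hsymm y₃ y₂] at k₁₂
  rw [hsymm y₂ y₁] at k₁₃
  rcases lt_max_iff.mp k₁₂ with _ | _ <;> rcases lt_max_iff.mp k₁₃ with _ | _ <;>
    rcases lt_max_iff.mp k₂₃ with _ | _ <;> linarith

end FourPointCondition

namespace SimpleGraph

variable {V : Type*} {G : SimpleGraph V} {w : Sym2 V → ℝ} {d : V → V → ℝ}

namespace Walk

def weight (w : Sym2 V → ℝ) {u v : V} (p : G.Walk u v) : ℝ := (p.edges.map w).sum

@[simp]
theorem weight_append {u v t : V} (p : G.Walk u v) (q : G.Walk v t) :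
    (p.append q).weight w = p.weight w + q.weight w := by
  simp [weight]

@[simp]
theorem weight_reverse {u v : V} (p : G.Walk u v) : p.reverse.weight w = p.weight w := by
  simp [weight]

theorem IsPath.append {a b c : V} {p : G.Walk a b} {q : G.Walk b c} (hp : p.IsPath)
    (hq : q.IsPath) (h : ∀ v ∈ p.support, v ∈ q.support → v = b) : (p.append q).IsPath := by
  have hq' : (b :: q.support.tail).Nodup := q.cons_tail_support ▸ hq.support_nodup
  rw [isPath_def, support_append, List.nodup_append]
  refine ⟨hp.support_nodup, hq'.of_cons, fun v hv v' hv' hvv' => ?_⟩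
  subst hvv'
  exact (List.nodup_cons.mp hq').1 (h v hv (List.mem_of_mem_tail hv') ▸ hv')

theorem exists_append_of_end_mem {S : Set V} {a b : V} (p : G.Walk a b) (hb : b ∈ S) :
    ∃ m ∈ S, ∃ (p₁ : G.Walk a m) (p₂ : G.Walk m b),
      p = p₁.append p₂ ∧ ∀ v ∈ p₁.support, v ∈ S → v = m := by
  induction p with
  | nil => exact ⟨_, hb, nil, nil, rfl, by simp⟩
  | @cons u _ _ h p ih =>
    by_cases hu : u ∈ S
    · exact ⟨u, hu, nil, cons h p, rfl, by simp⟩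
    · obtain ⟨m, hm, p₁, p₂, rfl, hfirst⟩ := ih hb
      refine ⟨m, hm, cons h p₁, p₂, rfl, ?_⟩
      intro v hv hvS
      rcases List.mem_cons.mp hv with rfl | hv
      · exact absurd hvS hu
      · exact hfirst v hv hvS

end Walk

def IsPathWeightDist (G : SimpleGraph V) (w : Sym2 V → ℝ) (d : V → V → ℝ) : Prop :=
  ∀ u v (p : G.Walk u v), p.IsPath → d u v = p.weight w

namespace IsPathWeightDist

theorem add_of_mem_support (hd : G.IsPathWeightDist w d) {u v m : V} {p : G.Walk u v}
    (hp : p.IsPath) (hm : m ∈ p.support) : d u m + d m v = d u v := by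
  obtain ⟨q, r, hq, hr, rfl⟩ := hp.mem_support_iff_exists_append.mp hm
  rw [hd _ _ _ hq, hd _ _ _ hr, hd _ _ _ hp, Walk.weight_append]

theorem symm (hd : G.IsPathWeightDist w d) (hG : G.Preconnected) (u v : V) :
    d u v = d v u := by
  classical
  obtain ⟨p⟩ := hG u v
  rw [hd _ _ _ p.bypass_isPath, hd _ _ _ p.bypass_isPath.reverse, Walk.weight_reverse]

theorem le_weight (hd : G.IsPathWeightDist w d) (hw : ∀ e ∈ G.edgeSet, 0 ≤ w e) {u v : V}
    (p : G.Walk u v) : d u v ≤ p.weight w := by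
  classical
  rw [hd _ _ _ p.bypass_isPath]
  refine (p.edges_bypass_sublist_edges.map w).sum_le_sum fun _ hwe => ?_
  obtain ⟨e, he, rfl⟩ := List.mem_map.mp hwe
  exact hw e (p.edges_subset_edgeSet he)

theorem triangle (hd : G.IsPathWeightDist w d) (hG : G.Preconnected)
    (hw : ∀ e ∈ G.edgeSet, 0 ≤ w e) (u m v : V) : d u v ≤ d u m + d m v := by
  classical
  obtain ⟨p⟩ := hG u m
  obtain ⟨q⟩ := hG m v
  calc d u v ≤ (p.bypass.append q.bypass).weight w := hd.le_weight hw _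
    _ = d u m + d m v := by
      rw [Walk.weight_append, hd _ _ _ p.bypass_isPath, hd _ _ _ q.bypass_isPath]

theorem add_add_eq_or (hd : G.IsPathWeightDist w d) {u v a b : V} {p : G.Walk u v}
    (hp : p.IsPath) (ha : a ∈ p.support) (hb : b ∈ p.support) :
    d u a + d a b + d b v = d u v ∨ d u b + d b a + d a v = d u v := by
  have hua := hd.add_of_mem_support hp ha
  obtain ⟨q, r, hq, hr, rfl⟩ := hp.mem_support_iff_exists_append.mp ha
  rcases (Walk.mem_support_append_iff q r).mp hb with hb | hb
  · have := hd.add_of_mem_support hq hb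
    right; linarith
  · have := hd.add_of_mem_support hr hb
    left; linarith

/-- `m` is the projection of `t` onto `p`: the first vertex of `p` on a path from `t`. -/
theorem exists_mem_support_add_eq (hd : G.IsPathWeightDist w d) (hG : G.Preconnected)
    {u v : V} {p : G.Walk u v} (hp : p.IsPath) (t : V) :
    ∃ m ∈ p.support, d t m + d m u = d t u ∧ d t m + d m v = d t v := by
  classical
  obtain ⟨r⟩ := hG t u
  obtain ⟨m, hm, r₁, r₂, hr, hfirst⟩ :=
    r.bypass.exists_append_of_end_mem (S := {v | v ∈ p.support}) p.start_mem_support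
  have hr₁₂ : (r₁.append r₂).IsPath := hr ▸ r.bypass_isPath
  refine ⟨m, hm, ?_, ?_⟩
  · rw [hd _ _ _ hr₁₂.of_append_left, hd _ _ _ hr₁₂.of_append_right, hd _ _ _ hr₁₂,
      Walk.weight_append]
  · obtain ⟨q, q', -, hq', rfl⟩ := hp.mem_support_iff_exists_append.mp hm
    have hpath : (r₁.append q').IsPath := hr₁₂.of_append_left.append hq' fun v hv hv' =>
      hfirst v hv ((Walk.mem_support_append_iff q q').mpr (Or.inr hv'))
    rw [hd _ _ _ hr₁₂.of_append_left, hd _ _ _ hq', hd _ _ _ hpath, Walk.weight_append]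

theorem fourPointCondition (hd : G.IsPathWeightDist w d) (hG : G.Preconnected)
    (hw : ∀ e ∈ G.edgeSet, 0 ≤ w e) : FourPointCondition d := by
  classical
  intro t x y z
  obtain ⟨p⟩ := hG y z
  have hp := p.bypass_isPath
  obtain ⟨m₁, hm₁, ht_y, ht_z⟩ := hd.exists_mem_support_add_eq hG hp t
  obtain ⟨m₂, hm₂, hx_y, hx_z⟩ := hd.exists_mem_support_add_eq hG hp x
  have h₁ := hd.add_of_mem_support hp hm₁
  have h₂ := hd.add_of_mem_support hp hm₂
  have := hd.triangle hG hw t m₁ x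
  have := hd.triangle hG hw m₁ m₂ x
  have := hd.symm hG m₁ y
  have := hd.symm hG m₂ y
  have := hd.symm hG m₂ x
  have := hd.symm hG m₁ m₂
  rcases hd.add_add_eq_or hp hm₁ hm₂ with h | h
  · exact le_max_of_le_right (by linarith)
  · exact le_max_of_le_left (by linarith)

end IsPathWeightDist

end SimpleGraph

theorem tree_no_three_clique_general {V : Type*} (G : SimpleGraph V)
    (hT : G.IsTree) (w : Sym2 V → ℝ) (hw : ∀ e ∈ G.edgeSet, 0 < w e)
    (d : V → V → ℝ)
    (hd : ∀ (u v : V) (p : G.Walk u v), p.IsPath → d u v = (p.edges.map w).sum)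
    (x : Finset V)
    (hgp : ∀ ξ : V, ∀ a ∈ x, ∀ b ∈ x, ∀ c ∈ x, a ≠ b → a ≠ c → b ≠ c →
      ¬(d ξ a = d ξ b ∧ d ξ b = d ξ c)) :
    ¬ ∃ y₁ y₂ y₃ : V, y₁ ∈ x ∧ y₂ ∈ x ∧ y₃ ∈ x ∧ y₁ ≠ y₂ ∧ y₁ ≠ y₃ ∧ y₂ ≠ y₃ ∧
      (cellD d x y₁ ∩ cellD d x y₂).Nonempty ∧
      (cellD d x y₁ ∩ cellD d x y₃).Nonempty ∧
      (cellD d x y₂ ∩ cellD d x y₃).Nonempty := by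
  have hd : G.IsPathWeightDist w d := hd
  have hG : G.Preconnected := hT.connected.preconnected
  have hw₀ : ∀ e ∈ G.edgeSet, 0 ≤ w e := fun e he => (hw e he).le
  exact (hd.fourPointCondition hG hw₀).not_exists_three_clique (hd.symm hG) hgp

/-- On (the vertex set of) a finite tree with positive edge weights and weighted
shortest-path metric `d`, if a finite configuration `x` is in general position
(no three distinct points of `x` equidistant from a common point), then there is no
Delaunay clique of three (or more) points: no three distinct points of `x` have
pairwise intersecting Voronoi cells. -/
theorem tree_no_three_clique {V : Type*} [Fintype V] (G : SimpleGraph V)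
    (hT : G.IsTree) (w : Sym2 V → ℝ) (hw : ∀ e ∈ G.edgeSet, 0 < w e)
    (d : V → V → ℝ)
    (hd : ∀ (u v : V) (p : G.Walk u v), p.IsPath → d u v = (p.edges.map w).sum)
    (x : Finset V)
    (hgp : ∀ ξ : V, ∀ a ∈ x, ∀ b ∈ x, ∀ c ∈ x, a ≠ b → a ≠ c → b ≠ c →
      ¬(d ξ a = d ξ b ∧ d ξ b = d ξ c)) :
    ¬ ∃ y₁ y₂ y₃ : V, y₁ ∈ x ∧ y₂ ∈ x ∧ y₃ ∈ x ∧ y₁ ≠ y₂ ∧ y₁ ≠ y₃ ∧ y₂ ≠ y₃ ∧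
      (cellD d x y₁ ∩ cellD d x y₂).Nonempty ∧
      (cellD d x y₁ ∩ cellD d x y₃).Nonempty ∧
      (cellD d x y₂ ∩ cellD d x y₃).Nonempty :=
  tree_no_three_clique_general G hT w hw d hd x hgp
end

section
/- Let T be a tree with positive edge weights and d the weighted shortest-path metric, extended to the geometric realization L of T (points along edges). For two points y₁, y₂ ∈ L, let ξ be the midpoint of the unique path between them, i.e., the unique point on that path with d(ξ, y₁) = d(ξ, y₂) = d(y₁, y₂)/2. Then for any finite configuration x ⊇ {y₁, y₂} in general position, y₁ and y₂ are Delaunay neighbours in x if and only if ξ ∈ C(y₁ | x) ∩ C(y₂ | x). -/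
variable {X : Type*} [MetricSpace X]

/-- Voronoi cell of `y` with respect to the finite configuration `x`. -/
def voronoiCell (x : Finset X) (y : X) : Set X :=
  {ξ | ∀ z ∈ x, dist ξ y ≤ dist ξ z}

/-- The Delaunay neighbour relation: the Voronoi cells intersect. -/
def Delaunay (x : Finset X) (y₁ y₂ : X) : Prop :=
  (voronoiCell x y₁ ∩ voronoiCell x y₂).Nonempty

/-- General position: no point of `X` is equidistant from three distinct points of `x`. -/
def GenPos (x : Finset X) : Prop :=
  ∀ ξ : X, ∀ a ∈ x, ∀ b ∈ x, ∀ c ∈ x, a ≠ b → a ≠ c → b ≠ c →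
    ¬(dist ξ a = dist ξ b ∧ dist ξ b = dist ξ c)

/-- In an ℝ-tree (here: a complete metric space with midpoints satisfying the four-point
condition, e.g. the geometric realization of a finite tree with positive edge lengths),
given the midpoint `ξ` of the unique path between `y₁` and `y₂`, for any finite
configuration `x` containing `y₁, y₂` and in general position, `y₁` and `y₂` are
Delaunay neighbours in `x` if and only if `ξ ∈ C(y₁|x) ∩ C(y₂|x)`. -/
theorem delaunay_iff_midpoint [CompleteSpace X]
    (hmid : ∀ a b : X, ∃ m : X, dist a m = dist a b / 2 ∧ dist m b = dist a b / 2)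
    (h4pt : ∀ a b c e : X,
      dist a b + dist c e ≤ max (dist a c + dist b e) (dist a e + dist b c))
    (y₁ y₂ : X) (hne : y₁ ≠ y₂) (ξ : X)
    (hξ₁ : dist y₁ ξ = dist y₁ y₂ / 2) (hξ₂ : dist ξ y₂ = dist y₁ y₂ / 2)
    (x : Finset X) (h₁ : y₁ ∈ x) (h₂ : y₂ ∈ x) (hgp : GenPos x) :
    Delaunay x y₁ y₂ ↔ ξ ∈ voronoiCell x y₁ ∩ voronoiCell x y₂ := by
  constructor
  · rintro ⟨η, hη₁, hη₂⟩
    have hr : dist η y₁ = dist η y₂ := le_antisymm (hη₁ y₂ h₂) (hη₂ y₁ h₁)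
    have key : ∀ z ∈ x, dist y₁ y₂ / 2 ≤ dist ξ z := by
      intro z hz
      have h4 := h4pt η z y₁ y₂
      have hz1 : dist η y₁ ≤ dist η z := hη₁ z hz
      have hmaxd : dist y₁ y₂ ≤ max (dist z y₂) (dist z y₁) := by
        rcases le_max_iff.mp h4 with h | h
        · have := hz1
          nlinarith [le_max_left (dist z y₂) (dist z y₁)]
        · nlinarith [le_max_right (dist z y₂) (dist z y₁)]
      rcases le_max_iff.mp hmaxd with h | h
      · have ht : dist z y₂ ≤ dist z ξ + dist ξ y₂ := dist_triangle z ξ y₂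
        rw [dist_comm ξ z]
        linarith
      · have ht : dist z y₁ ≤ dist z ξ + dist ξ y₁ := dist_triangle z ξ y₁
        rw [dist_comm ξ z]
        rw [dist_comm ξ y₁, hξ₁] at ht
        linarith
    constructor
    · intro z hz
      rw [dist_comm ξ y₁, hξ₁]
      exact key z hz
    · intro z hz
      rw [hξ₂]
      exact key z hz
  · intro h
    exact ⟨ξ, h⟩
end

section
/- Let L be the geometric realization of a finite tree with positive edge lengths and d its path metric. Let the Delaunay clique indicator χ(y | x) be 1 iff all pairs in y ⊆ x have intersecting Voronoi cells with respect to x. Then for all finite configurations y ⊆ z ⊂ L in general position and any point u ∉ z with z ∪ {u} in general position: if χ(y | z) ≠ χ(y | z ∪ {u}), then every point of y is a Delaunay neighbour of u in the configuration z ∪ {u}. (Consistency condition C1.) -/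
open scoped Classical

variable {X : Type*} [MetricSpace X] [DecidableEq X]

/-- The Delaunay clique indicator. -/
noncomputable def chi (x y : Finset X) : ℕ :=
  if ∀ a ∈ y, ∀ b ∈ y, Delaunay x a b then 1 else 0

/-- Key four-point consequence: if `x` lies between `p` and `q`, then the distance
from any point `a` to `x` is at most `max (d(a,p) - d(p,x)) (d(a,q) - d(x,q))`. -/
lemma dist_le_max_of_between
    (h4pt : ∀ a b c e : X,
      dist a b + dist c e ≤ max (dist a c + dist b e) (dist a e + dist b c))
    (a p q x : X) (hx : dist p x + dist x q = dist p q) :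
    dist a x ≤ max (dist a p - dist p x) (dist a q - dist x q) := by
  have h := h4pt a x p q
  rcases le_max_iff.mp h with h1 | h1
  · have hc : dist x p = dist p x := dist_comm x p
    apply le_max_of_le_left
    linarith
  · have hc : dist x p = dist p x := dist_comm x p
    apply le_max_of_le_right
    linarith

/-- Half-spaces `{ξ | d(ξ,a) ≤ d(ξ,c)}` are convex: they are closed under betweenness. -/
lemma halfspace_convex
    (h4pt : ∀ a b c e : X,
      dist a b + dist c e ≤ max (dist a c + dist b e) (dist a e + dist b c))
    (a c p q x : X) (hx : dist p x + dist x q = dist p q)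
    (hp : dist p a ≤ dist p c) (hq : dist q a ≤ dist q c) :
    dist x a ≤ dist x c := by
  have h := dist_le_max_of_between h4pt a p q x hx
  rw [dist_comm x a, dist_comm x c]
  have t1 : dist c p ≤ dist c x + dist x p := dist_triangle c x p
  have t2 : dist c q ≤ dist c x + dist x q := dist_triangle c x q
  have e1 : dist a p = dist p a := dist_comm a p
  have e2 : dist a q = dist q a := dist_comm a q
  have e3 : dist c p = dist p c := dist_comm c p
  have e4 : dist c q = dist q c := dist_comm c q
  have e5 : dist x p = dist p x := dist_comm x p
  have e6 : dist c x = dist x c := dist_comm c x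
  have e7 : dist a x = dist x a := dist_comm a x
  rcases le_max_iff.mp h with h1 | h1 <;> linarith

/-- Bisection: in a complete metric space with midpoints, any continuous function
changing sign between `P` and `Q` vanishes at some point between `P` and `Q`. -/
lemma bisection [CompleteSpace X]
    (hmid : ∀ a b : X, ∃ m : X, dist a m = dist a b / 2 ∧ dist m b = dist a b / 2)
    (f : X → ℝ) (hf : Continuous f) (P Q : X) (hP : f P ≤ 0) (hQ : 0 ≤ f Q) :
    ∃ w : X, dist P w + dist w Q = dist P Q ∧ f w = 0 := by
  classical
  obtain ⟨mid, hmids⟩ : ∃ mid : X → X → X, ∀ a b : X,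
      dist a (mid a b) = dist a b / 2 ∧ dist (mid a b) b = dist a b / 2 :=
    ⟨fun a b => (hmid a b).choose, fun a b => (hmid a b).choose_spec⟩
  set F : X × X → X × X := fun pq =>
    if f (mid pq.1 pq.2) ≤ 0 then (mid pq.1 pq.2, pq.2) else (pq.1, mid pq.1 pq.2)
    with hF
  set s : ℕ → X × X := fun n => F^[n] (P, Q) with hs
  have hstep : ∀ n, s (n + 1) = F (s n) := by
    intro n
    simp only [hs, Function.iterate_succ_apply']
  have key : ∀ n, (f (s n).1 ≤ 0 ∧ 0 ≤ f (s n).2) ∧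
      dist P (s n).1 + dist (s n).1 (s n).2 + dist (s n).2 Q = dist P Q ∧
      dist (s n).1 (s n).2 = dist P Q / 2 ^ n := by
    intro n
    induction n with
    | zero =>
      refine ⟨⟨hP, hQ⟩, ?_, ?_⟩ <;> simp [hs, dist_self]
    | succ n ih =>
      obtain ⟨⟨hp, hq⟩, hchain, hlen⟩ := ih
      have hm1 := (hmids (s n).1 (s n).2).1
      have hm2 := (hmids (s n).1 (s n).2).2
      by_cases hfm : f (mid (s n).1 (s n).2) ≤ 0
      · have hs1 : s (n + 1) = (mid (s n).1 (s n).2, (s n).2) := by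
          rw [hstep n, hF]; simp [hfm]
        rw [hs1]
        refine ⟨⟨hfm, hq⟩, ?_, ?_⟩
        · have t1 : dist P (mid (s n).1 (s n).2) ≤
              dist P (s n).1 + dist (s n).1 (mid (s n).1 (s n).2) :=
            dist_triangle _ _ _
          have t2 : dist P Q ≤ dist P (mid (s n).1 (s n).2) +
              dist (mid (s n).1 (s n).2) Q := dist_triangle _ _ _
          have t3 : dist (mid (s n).1 (s n).2) Q ≤
              dist (mid (s n).1 (s n).2) (s n).2 + dist (s n).2 Q :=
            dist_triangle _ _ _
          simp only []
          linarith
        · simp only []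
          rw [hm2, hlen]
          ring
      · have hs1 : s (n + 1) = ((s n).1, mid (s n).1 (s n).2) := by
          rw [hstep n, hF]; simp [hfm]
        rw [hs1]
        refine ⟨⟨hp, le_of_lt (not_le.mp hfm)⟩, ?_, ?_⟩
        · have t1 : dist (mid (s n).1 (s n).2) Q ≤
              dist (mid (s n).1 (s n).2) (s n).2 + dist (s n).2 Q :=
            dist_triangle _ _ _
          have t2 : dist P Q ≤ dist P (s n).1 + dist (s n).1 Q := dist_triangle _ _ _
          have t3 : dist (s n).1 Q ≤ dist (s n).1 (mid (s n).1 (s n).2) +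
              dist (mid (s n).1 (s n).2) Q := dist_triangle _ _ _
          simp only []
          linarith
        · simp only []
          rw [hm1, hlen]
          ring
  -- the first coordinates form a Cauchy sequence
  have hgeom : ∀ n, dist ((fun n => (s n).1) n) ((fun n => (s n).1) (n + 1)) ≤
      dist P Q * (1 / 2 : ℝ) ^ n := by
    intro n
    show dist (s n).1 (s (n + 1)).1 ≤ dist P Q * (1 / 2 : ℝ) ^ n
    obtain ⟨⟨hp, hq⟩, hchain, hlen⟩ := key n
    have hm1 := (hmids (s n).1 (s n).2).1
    have h2 : (0:ℝ) < 2 ^ n := by positivity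
    have hpow : dist P Q / 2 ^ n / 2 ≤ dist P Q * (1 / 2 : ℝ) ^ n := by
      rw [div_pow, one_pow, mul_one_div]
      have hn : (0:ℝ) ≤ dist P Q / 2 ^ n := div_nonneg dist_nonneg (le_of_lt h2)
      linarith [div_le_self hn (by norm_num : (1:ℝ) ≤ 2)]
    by_cases hfm : f (mid (s n).1 (s n).2) ≤ 0
    · have hs1 : s (n + 1) = (mid (s n).1 (s n).2, (s n).2) := by
        rw [hstep n, hF]; simp [hfm]
      rw [hs1]
      calc dist (s n).1 (mid (s n).1 (s n).2) = dist (s n).1 (s n).2 / 2 := hm1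
        _ = dist P Q / 2 ^ n / 2 := by rw [hlen]
        _ ≤ _ := hpow
    · have hs1 : s (n + 1) = ((s n).1, mid (s n).1 (s n).2) := by
        rw [hstep n, hF]; simp [hfm]
      rw [hs1]
      have hz : dist (s n).1 ((s n).1, mid (s n).1 (s n).2).1 = 0 := dist_self _
      rw [hz]
      positivity
  have hcauchy : CauchySeq (fun n => (s n).1) :=
    cauchySeq_of_le_geometric (1/2) (dist P Q) (by norm_num) hgeom
  obtain ⟨w, hw⟩ := cauchySeq_tendsto_of_complete hcauchy
  -- the second coordinates tend to the same limit
  have hdist0 : Filter.Tendsto (fun n => dist ((s n).1) ((s n).2)) Filter.atTop (nhds 0) := by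
    have : ∀ n, dist ((s n).1) ((s n).2) = dist P Q * (1/2 : ℝ) ^ n := by
      intro n
      rw [(key n).2.2, div_pow, one_pow, mul_one_div]
    rw [funext this]
    have := (tendsto_pow_atTop_nhds_zero_of_lt_one (by norm_num : (0:ℝ) ≤ 1/2)
      (by norm_num : (1/2:ℝ) < 1)).const_mul (dist P Q)
    simpa using this
  have hw2 : Filter.Tendsto (fun n => (s n).2) Filter.atTop (nhds w) :=
    hw.congr_dist hdist0
  refine ⟨w, ?_, ?_⟩
  · -- betweenness in the limit
    have h1 : Filter.Tendsto (fun n => dist P ((s n).1) + dist ((s n).1) ((s n).2) +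
        dist ((s n).2) Q) Filter.atTop (nhds (dist P w + 0 + dist w Q)) := by
      exact ((Filter.Tendsto.dist tendsto_const_nhds hw).add hdist0).add
        (Filter.Tendsto.dist hw2 tendsto_const_nhds)
    have h2 : Filter.Tendsto (fun n => dist P ((s n).1) + dist ((s n).1) ((s n).2) +
        dist ((s n).2) Q) Filter.atTop (nhds (dist P Q)) := by
      have : (fun n => dist P ((s n).1) + dist ((s n).1) ((s n).2) + dist ((s n).2) Q)
          = fun _ => dist P Q := funext fun n => (key n).2.1
      rw [this]
      exact tendsto_const_nhds
    have := tendsto_nhds_unique h1 h2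
    linarith
  · -- f vanishes in the limit
    have hfw1 : Filter.Tendsto (fun n => f ((s n).1)) Filter.atTop (nhds (f w)) :=
      (hf.continuousAt.tendsto).comp hw
    have hfw2 : Filter.Tendsto (fun n => f ((s n).2)) Filter.atTop (nhds (f w)) :=
      (hf.continuousAt.tendsto).comp hw2
    have hle : f w ≤ 0 := le_of_tendsto' hfw1 fun n => (key n).1.1
    have hge : 0 ≤ f w := ge_of_tendsto' hfw2 fun n => (key n).1.2
    linarith

/-- Midpoint-witness lemma: if some point `ξ` of the Voronoi cell of `a` (w.r.t. `z`)
is at least as close to `u` as to `a`, then `a` and `u` are Delaunay neighbours in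
`insert u z`; the midpoint of `a` and `u` is a witness. -/
lemma delaunay_of_cell_point
    (hmid : ∀ a b : X, ∃ m : X, dist a m = dist a b / 2 ∧ dist m b = dist a b / 2)
    (h4pt : ∀ a b c e : X,
      dist a b + dist c e ≤ max (dist a c + dist b e) (dist a e + dist b c))
    (z : Finset X) (a u ξ : X)
    (hcell : ∀ c ∈ z, dist ξ a ≤ dist ξ c)
    (hclose : dist ξ u ≤ dist ξ a) :
    Delaunay (insert u z) a u := by
  obtain ⟨m, hm1, hm2⟩ := hmid a u
  -- from the four-point condition, `d(ξ,m) ≤ d(ξ,a) - d(a,u)/2`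
  have h := h4pt ξ m a u
  have hmax : max (dist ξ a + dist m u) (dist ξ u + dist m a) =
      dist ξ a + dist a u / 2 := by
    have hma : dist m a = dist a u / 2 := by rw [dist_comm m a]; exact hm1
    rw [hm2, hma]
    rw [max_eq_left (by linarith)]
  have hξm : dist ξ m ≤ dist ξ a - dist a u / 2 := by
    rw [hmax] at h
    linarith
  -- the midpoint is in both Voronoi cells w.r.t. `insert u z`
  have hkey : ∀ c ∈ z, dist a u / 2 ≤ dist m c := by
    intro c hc
    have t : dist ξ c ≤ dist ξ m + dist m c := dist_triangle ξ m c
    have := hcell c hc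
    linarith
  refine ⟨m, ?_, ?_⟩
  · intro c hc
    have hma : dist m a = dist a u / 2 := by rw [dist_comm m a]; exact hm1
    rcases Finset.mem_insert.mp hc with rfl | hc
    · rw [hma, hm2]
    · rw [hma]; exact hkey c hc
  · intro c hc
    rcases Finset.mem_insert.mp hc with rfl | hc
    · exact le_refl _
    · rw [hm2]; exact hkey c hc

/-- In general position, no three distinct points of `z` can be pairwise Delaunay:
the median of three pairwise witnesses would be equidistant from all three points. -/
lemma no_three_clique [CompleteSpace X]
    (hmid : ∀ a b : X, ∃ m : X, dist a m = dist a b / 2 ∧ dist m b = dist a b / 2)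
    (h4pt : ∀ a b c e : X,
      dist a b + dist c e ≤ max (dist a c + dist b e) (dist a e + dist b c))
    (z : Finset X) (hgp : GenPos z) (a b c : X)
    (ha : a ∈ z) (hb : b ∈ z) (hc : c ∈ z)
    (hab : a ≠ b) (hac : a ≠ c) (hbc : b ≠ c)
    (h1 : Delaunay z a b) (h2 : Delaunay z b c) (h3 : Delaunay z a c) : False := by
  obtain ⟨ξ₁, hξ₁a, hξ₁b⟩ := h1
  obtain ⟨ξ₂, hξ₂b, hξ₂c⟩ := h2
  obtain ⟨ξ₃, hξ₃a, hξ₃c⟩ := h3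
  simp only [voronoiCell, Set.mem_setOf_eq] at hξ₁a hξ₁b hξ₂b hξ₂c hξ₃a hξ₃c
  have tri1 : dist ξ₂ ξ₃ ≤ dist ξ₁ ξ₂ + dist ξ₁ ξ₃ := by
    have h := dist_triangle ξ₂ ξ₁ ξ₃
    have hcomm : dist ξ₂ ξ₁ = dist ξ₁ ξ₂ := dist_comm _ _
    linarith
  have tri2 : dist ξ₁ ξ₃ ≤ dist ξ₁ ξ₂ + dist ξ₂ ξ₃ := dist_triangle ξ₁ ξ₂ ξ₃
  have hk0 : 0 ≤ (dist ξ₁ ξ₂ + dist ξ₁ ξ₃ - dist ξ₂ ξ₃) / 2 := by linarith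
  have hkd : (dist ξ₁ ξ₂ + dist ξ₁ ξ₃ - dist ξ₂ ξ₃) / 2 ≤ dist ξ₁ ξ₂ := by linarith
  obtain ⟨w, hwb, hwf⟩ := bisection hmid
    (fun x => dist ξ₁ x - (dist ξ₁ ξ₂ + dist ξ₁ ξ₃ - dist ξ₂ ξ₃) / 2)
    ((continuous_const.dist continuous_id).sub continuous_const)
    ξ₁ ξ₂ (by simp [dist_self]; linarith) (by simp; linarith)
  have hw1 : dist ξ₁ w = (dist ξ₁ ξ₂ + dist ξ₁ ξ₃ - dist ξ₂ ξ₃) / 2 := by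
    have := hwf
    linarith
  have hw2 : dist w ξ₂ = dist ξ₁ ξ₂ - (dist ξ₁ ξ₂ + dist ξ₁ ξ₃ - dist ξ₂ ξ₃) / 2 := by
    linarith [hwb]
  -- distance from ξ₃ to w
  have hw3 : dist w ξ₃ = dist ξ₁ ξ₃ - (dist ξ₁ ξ₂ + dist ξ₁ ξ₃ - dist ξ₂ ξ₃) / 2 := by
    have hub := dist_le_max_of_between h4pt ξ₃ ξ₁ ξ₂ w hwb
    have hc1 : dist ξ₃ ξ₁ = dist ξ₁ ξ₃ := dist_comm _ _
    have hc2 : dist ξ₃ ξ₂ = dist ξ₂ ξ₃ := dist_comm _ _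
    have hc3 : dist ξ₃ w = dist w ξ₃ := dist_comm _ _
    have hlb : dist ξ₁ ξ₃ ≤ dist ξ₁ w + dist w ξ₃ := dist_triangle ξ₁ w ξ₃
    rcases le_max_iff.mp hub with h | h <;> linarith
  -- w is between each pair of witnesses
  have hbet13 : dist ξ₁ w + dist w ξ₃ = dist ξ₁ ξ₃ := by linarith
  have hbet23 : dist ξ₂ w + dist w ξ₃ = dist ξ₂ ξ₃ := by
    have hc : dist ξ₂ w = dist w ξ₂ := dist_comm _ _
    linarith
  -- convexity: w lies in all three Voronoi cells
  have hwa : ∀ c' ∈ z, dist w a ≤ dist w c' := fun c' hc' =>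
    halfspace_convex h4pt a c' ξ₁ ξ₃ w hbet13 (hξ₁a c' hc') (hξ₃a c' hc')
  have hwbcell : ∀ c' ∈ z, dist w b ≤ dist w c' := fun c' hc' =>
    halfspace_convex h4pt b c' ξ₁ ξ₂ w hwb (hξ₁b c' hc') (hξ₂b c' hc')
  have hwc : ∀ c' ∈ z, dist w c ≤ dist w c' := fun c' hc' =>
    halfspace_convex h4pt c c' ξ₂ ξ₃ w hbet23 (hξ₂c c' hc') (hξ₃c c' hc')
  have e1 : dist w a = dist w b := le_antisymm (hwa b hb) (hwbcell a ha)
  have e2 : dist w b = dist w c := le_antisymm (hwbcell c hc) (hwc b hb)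
  exact hgp w a ha b hb c hc hab hac hbc ⟨e1, e2⟩

/-- Consistency condition (C1) for the Delaunay relation on an ℝ-tree (a complete
metric space with midpoints satisfying the four-point condition, e.g. the geometric
realization of a finite tree with positive edge lengths): if the clique indicator of
`y ⊆ z` changes upon adding `u ∉ z`, then every point of `y` is a Delaunay neighbour
of `u` in `z ∪ {u}`. -/
theorem delaunay_C1 [CompleteSpace X]
    (hmid : ∀ a b : X, ∃ m : X, dist a m = dist a b / 2 ∧ dist m b = dist a b / 2)
    (h4pt : ∀ a b c e : X,
      dist a b + dist c e ≤ max (dist a c + dist b e) (dist a e + dist b c))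
    (y z : Finset X) (hyz : y ⊆ z) (u : X) (hu : u ∉ z)
    (hgp : GenPos z) (hgp' : GenPos (insert u z)) :
    chi z y ≠ chi (insert u z) y → ∀ a ∈ y, Delaunay (insert u z) a u := by
  intro hne a' ha'
  -- monotonicity: Delaunay w.r.t. the larger configuration implies the smaller
  have hmono : ∀ s t : X, Delaunay (insert u z) s t → Delaunay z s t := by
    rintro s t ⟨w, hw1, hw2⟩
    exact ⟨w, fun c hc => hw1 c (Finset.mem_insert_of_mem hc),
      fun c hc => hw2 c (Finset.mem_insert_of_mem hc)⟩
  by_cases h1 : ∀ a ∈ y, ∀ b ∈ y, Delaunay z a b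
  case neg =>
    -- then chi z y = 0, and chi (insert u z) y must be 1, forcing chi z y = 1: contradiction
    by_cases h2 : ∀ a ∈ y, ∀ b ∈ y, Delaunay (insert u z) a b
    · exact absurd (fun a ha b hb => hmono a b (h2 a ha b hb)) h1
    · exact absurd (by simp only [chi]; rw [if_neg h1, if_neg h2]) hne
  case pos =>
  by_cases h2 : ∀ a ∈ y, ∀ b ∈ y, Delaunay (insert u z) a b
  · exact absurd (by simp only [chi]; rw [if_pos h1, if_pos h2]) hne
  push_neg at h2
  obtain ⟨a₀, ha₀, b₀, hb₀, hnd⟩ := h2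
  have ha₀z : a₀ ∈ z := hyz ha₀
  have hb₀z : b₀ ∈ z := hyz hb₀
  have ha'z : a' ∈ z := hyz ha'
  -- a₀ ≠ b₀
  have hne0 : a₀ ≠ b₀ := by
    rintro rfl
    exact hnd ⟨a₀, fun c _ => by simpa using dist_nonneg, fun c _ => by simpa using dist_nonneg⟩
  -- witness of the broken pair
  obtain ⟨ξ₀, hξa, hξb⟩ := h1 a₀ ha₀ b₀ hb₀
  simp only [voronoiCell, Set.mem_setOf_eq] at hξa hξb
  have heq0 : dist ξ₀ a₀ = dist ξ₀ b₀ := le_antisymm (hξa b₀ hb₀z) (hξb a₀ ha₀z)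
  -- u must capture the witness
  have hcap : dist ξ₀ u < dist ξ₀ a₀ := by
    by_contra hcon
    push_neg at hcon
    refine hnd ⟨ξ₀, ?_, ?_⟩ <;> intro c hc <;> rcases Finset.mem_insert.mp hc with rfl | hc
    · exact hcon
    · exact hξa c hc
    · rw [← heq0]; exact hcon
    · exact hξb c hc
  -- conclude for each element of y
  by_cases hca : a' = a₀
  · subst hca
    exact delaunay_of_cell_point hmid h4pt z a' u ξ₀ hξa (le_of_lt hcap)
  by_cases hcb : a' = b₀
  · subst hcb
    exact delaunay_of_cell_point hmid h4pt z a' u ξ₀ hξb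
      (le_of_lt (heq0 ▸ hcap))
  -- otherwise a₀, b₀, a' would form a 3-clique, impossible in general position
  have hda : a₀ ≠ a' := fun h => hca h.symm
  have hdb : b₀ ≠ a' := fun h => hcb h.symm
  exact (no_three_clique hmid h4pt z hgp a₀ b₀ a' ha₀z hb₀z ha'z hne0 hda hdb
    (h1 a₀ ha₀ b₀ hb₀) (h1 b₀ hb₀ a' ha') (h1 a₀ ha₀ a' ha')).elim
end

section
/- Let L be the geometric realization of a finite tree with positive edge lengths and d its path metric, and let χ denote the Delaunay clique indicator. Then for all finite y ⊆ z ⊂ L in general position and points u, v ∉ z (with all relevant configurations in general position), if u and v are not Delaunay neighbours in x = z ∪ {u, v}, then χ(y | z ∪ {u}) + χ(y | z ∪ {v}) = χ(y | z) + χ(y | x). (Consistency condition C2.) -/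
open scoped Classical

variable {X : Type*} [MetricSpace X] [DecidableEq X]

/-- Characterization of the Delaunay relation via the diametral ball of the pair. -/
lemma char_del
    (hmid : ∀ a b : X, ∃ m : X, dist a m = dist a b / 2 ∧ dist m b = dist a b / 2)
    (h4pt : ∀ a b c e : X,
      dist a b + dist c e ≤ max (dist a c + dist b e) (dist a e + dist b c))
    (w : Finset X) (a b : X) (ha : a ∈ w) (hb : b ∈ w) :
    Delaunay w a b ↔ ∀ c ∈ w, dist a b ≤ max (dist c a) (dist c b) := by
  constructor
  · rintro ⟨p, hpa, hpb⟩ c hc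
    by_contra hlt
    push_neg at hlt
    obtain ⟨hlt1, hlt2⟩ := max_lt_iff.mp hlt
    obtain ⟨m, hm1, hm2⟩ := hmid a b
    have hma : dist m a = dist a b / 2 := by rw [dist_comm]; exact hm1
    have hpab : dist p a = dist p b := le_antisymm (hpa b hb) (hpb a ha)
    have F1 := h4pt p m a b
    have F2 := h4pt c m a b
    rw [hm2, hma, hpab, max_self] at F1
    rw [hm2, hma] at F2
    have hF2 : max (dist c a + dist a b / 2) (dist c b + dist a b / 2)
        < dist a b + dist a b / 2 := max_lt (by linarith) (by linarith)
    have t1 : dist p c ≤ dist p m + dist m c := dist_triangle p m c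
    have e1 : dist m c = dist c m := dist_comm m c
    have hc' := hpa c hc
    rw [hpab] at hc'
    linarith
  · intro h
    obtain ⟨m, hm1, hm2⟩ := hmid a b
    have hma : dist m a = dist a b / 2 := by rw [dist_comm]; exact hm1
    refine ⟨m, fun c hc => ?_, fun c hc => ?_⟩
    · have hcc := h c hc
      have t1 : dist c a ≤ dist c m + dist m a := dist_triangle c m a
      have t2 : dist c b ≤ dist c m + dist m b := dist_triangle c m b
      have e1 : dist m c = dist c m := dist_comm m c
      show dist m a ≤ dist m c
      rcases le_max_iff.mp hcc with hx | hx <;> linarith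
    · have hcc := h c hc
      have t1 : dist c a ≤ dist c m + dist m a := dist_triangle c m a
      have t2 : dist c b ≤ dist c m + dist m b := dist_triangle c m b
      have e1 : dist m c = dist c m := dist_comm m c
      show dist m b ≤ dist m c
      rcases le_max_iff.mp hcc with hx | hx <;> linarith

/-- Core of the replacement lemma: contradiction in the asymmetric case. -/
lemma RL_core
    (h4pt : ∀ a b c e : X,
      dist a b + dist c e ≤ max (dist a c + dist b e) (dist a e + dist b c))
    (a b u v c : X)
    (h1 : dist c u < dist u v) (h2 : dist c v < dist u v)
    (h3 : dist u a < dist a b) (h4 : dist u b < dist a b)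
    (hA : dist u a ≤ dist c a)
    (n1 : ¬ (dist c a < dist a v ∧ dist c v < dist a v))
    (n2 : ¬ (dist c b < dist b v ∧ dist c v < dist b v)) : False := by
  have F1 := h4pt u v c a
  have F2 := h4pt a b c u
  have F3 := h4pt u v c b
  have e1 : dist u c = dist c u := dist_comm u c
  have e2 : dist v c = dist c v := dist_comm v c
  have e3 : dist v a = dist a v := dist_comm v a
  have e4 : dist v b = dist b v := dist_comm v b
  have e5 : dist a c = dist c a := dist_comm a c
  have e6 : dist b c = dist c b := dist_comm b c
  have e7 : dist a u = dist u a := dist_comm a u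
  have e8 : dist b u = dist u b := dist_comm b u
  rcases le_max_iff.mp F1 with hF1 | hF1
  swap
  · -- dist u v + dist c a ≤ dist u a + dist v c  :  duv ≤ V, contra h2
    linarith
  -- hF1 : dist u v + dist c a ≤ dist u c + dist v a
  have hav : dist c a < dist a v := by linarith
  have hVav : dist a v ≤ dist c v := not_lt.mp (fun hh => n1 ⟨hav, hh⟩)
  have hAU : dist c a < dist c u := by linarith
  rcases le_max_iff.mp F2 with hF2 | hF2
  · -- dist a b + dist c u ≤ dist a c + dist b u : with h4 gives dist c u < dist c a, contra
    linarith
  -- hF2 : dist a b + dist c u ≤ dist a u + dist b c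
  have hUB : dist c u < dist c b := by linarith
  rcases le_max_iff.mp F3 with hF3 | hF3
  · -- dist u v + dist c b ≤ dist u c + dist v b : dist b v big
    have hbv : dist c b < dist b v := by linarith
    have hVbv : dist b v ≤ dist c v := not_lt.mp (fun hh => n2 ⟨hbv, hh⟩)
    linarith
  · -- dist u v + dist c b ≤ dist u b + dist v c
    linarith

/-- Replacement lemma: if `c` lies in the open diametral ball of `(u,v)` and `u`
lies in the open diametral ball of `(a,b)`, then `c` lies in the open diametral
ball of `(a,v)`, `(b,v)` or `(a,b)`. -/
lemma RL
    (h4pt : ∀ a b c e : X,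
      dist a b + dist c e ≤ max (dist a c + dist b e) (dist a e + dist b c))
    (a b u v c : X)
    (h1 : dist c u < dist u v) (h2 : dist c v < dist u v)
    (h3 : dist u a < dist a b) (h4 : dist u b < dist a b) :
    (dist c a < dist a v ∧ dist c v < dist a v) ∨
    (dist c b < dist b v ∧ dist c v < dist b v) ∨
    (dist c a < dist a b ∧ dist c b < dist a b) := by
  by_contra hcon
  obtain ⟨n1, hcon⟩ := not_or.mp hcon
  obtain ⟨n2, n3⟩ := not_or.mp hcon
  by_cases hA : dist u a ≤ dist c a
  · exact RL_core h4pt a b u v c h1 h2 h3 h4 hA n1 n2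
  by_cases hB : dist u b ≤ dist c b
  · have h3' : dist u b < dist b a := by rw [dist_comm b a]; exact h4
    have h4' : dist u a < dist b a := by rw [dist_comm b a]; exact h3
    exact RL_core h4pt b a u v c h1 h2 h3' h4' hB n2 n1
  · push_neg at hA hB
    exact n3 ⟨by linarith, by linarith⟩

/-- The clique indicator in terms of the diametral-ball conditions. -/
lemma chi_eq
    (hmid : ∀ a b : X, ∃ m : X, dist a m = dist a b / 2 ∧ dist m b = dist a b / 2)
    (h4pt : ∀ a b c e : X,
      dist a b + dist c e ≤ max (dist a c + dist b e) (dist a e + dist b c))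
    (w y : Finset X) (hyw : y ⊆ w) :
    chi w y
      = if ∀ a ∈ y, ∀ b ∈ y, ∀ c ∈ w, dist a b ≤ max (dist c a) (dist c b)
        then 1 else 0 := by
  have hiff : (∀ a ∈ y, ∀ b ∈ y, Delaunay w a b) ↔
      (∀ a ∈ y, ∀ b ∈ y, ∀ c ∈ w, dist a b ≤ max (dist c a) (dist c b)) := by
    constructor
    · intro h a ha b hb
      exact (char_del hmid h4pt w a b (hyw ha) (hyw hb)).mp (h a ha b hb)
    · intro h a ha b hb
      exact (char_del hmid h4pt w a b (hyw ha) (hyw hb)).mpr (h a ha b hb)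
  unfold chi
  simp only [hiff]

/-- Consistency condition (C2) for the Delaunay relation on an ℝ-tree (a complete
metric space with midpoints satisfying the four-point condition, e.g. the geometric
realization of a finite tree with positive edge lengths): for `y ⊆ z`, points
`u, v ∉ z` with all relevant configurations in general position, if `u` and `v` are
not Delaunay neighbours in `x = z ∪ {u,v}`, then
`χ(y | z∪{u}) + χ(y | z∪{v}) = χ(y | z) + χ(y | x)`. -/
theorem delaunay_C2 [CompleteSpace X]
    (hmid : ∀ a b : X, ∃ m : X, dist a m = dist a b / 2 ∧ dist m b = dist a b / 2)
    (h4pt : ∀ a b c e : X,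
      dist a b + dist c e ≤ max (dist a c + dist b e) (dist a e + dist b c))
    (y z : Finset X) (hyz : y ⊆ z) (u v : X) (hu : u ∉ z) (hv : v ∉ z) (huv : u ≠ v)
    (hgp : GenPos (insert u (insert v z)))
    (hnn : ¬ Delaunay (insert u (insert v z)) u v) :
    chi (insert u z) y + chi (insert v z) y
      = chi z y + chi (insert u (insert v z)) y := by
  classical
  have hyzu : y ⊆ insert u z := hyz.trans (Finset.subset_insert u z)
  have hyzv : y ⊆ insert v z := hyz.trans (Finset.subset_insert v z)
  have hyx : y ⊆ insert u (insert v z) := hyzv.trans (Finset.subset_insert u _)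
  rw [chi_eq hmid h4pt z y hyz, chi_eq hmid h4pt _ y hyzu, chi_eq hmid h4pt _ y hyzv,
      chi_eq hmid h4pt _ y hyx]
  set Cz : Prop :=
    ∀ a ∈ y, ∀ b ∈ y, ∀ c ∈ z, dist a b ≤ max (dist c a) (dist c b) with hCz_def
  set Czu : Prop :=
    ∀ a ∈ y, ∀ b ∈ y, ∀ c ∈ insert u z, dist a b ≤ max (dist c a) (dist c b) with hCzu_def
  set Czv : Prop :=
    ∀ a ∈ y, ∀ b ∈ y, ∀ c ∈ insert v z, dist a b ≤ max (dist c a) (dist c b) with hCzv_def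
  set Cx : Prop :=
    ∀ a ∈ y, ∀ b ∈ y, ∀ c ∈ insert u (insert v z),
      dist a b ≤ max (dist c a) (dist c b) with hCx_def
  -- monotonicity
  have mono_u : Czu → Cz := fun h a ha b hb c hc =>
    h a ha b hb c (Finset.mem_insert_of_mem hc)
  have mono_v : Czv → Cz := fun h a ha b hb c hc =>
    h a ha b hb c (Finset.mem_insert_of_mem hc)
  have hsub_ux : insert u z ⊆ insert u (insert v z) :=
    Finset.insert_subset_insert u (Finset.subset_insert v z)
  have mono_xu : Cx → Czu := fun h a ha b hb c hc => h a ha b hb c (hsub_ux hc)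
  have mono_xv : Cx → Czv := fun h a ha b hb c hc =>
    h a ha b hb c (Finset.mem_insert_of_mem hc)
  have hcomb : Czu → Czv → Cx := by
    intro h1 h2 a ha b hb c hc
    rcases Finset.mem_insert.mp hc with rfl | hc'
    · exact h1 a ha b hb c (Finset.mem_insert_self c z)
    · exact h2 a ha b hb c hc'
  -- extract the blocking point from hnn
  have hDel := char_del hmid h4pt (insert u (insert v z)) u v
    (Finset.mem_insert_self u _) (Finset.mem_insert_of_mem (Finset.mem_insert_self v z))
  have hex : ∃ c ∈ insert u (insert v z), max (dist c u) (dist c v) < dist u v := by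
    by_contra hno
    push_neg at hno
    exact hnn (hDel.mpr (fun c hc => hno c hc))
  obtain ⟨c₀, hc₀mem, hc₀⟩ := hex
  obtain ⟨hc₀u, hc₀v⟩ := max_lt_iff.mp hc₀
  have hc₀z : c₀ ∈ z := by
    rcases Finset.mem_insert.mp hc₀mem with rfl | h'
    · exact absurd hc₀v (lt_irrefl _)
    rcases Finset.mem_insert.mp h' with rfl | h''
    · rw [dist_comm c₀ u] at hc₀u
      exact absurd hc₀u (lt_irrefl _)
    · exact h''
  -- Claim 1 : u and v cannot both break the clique
  have hclaim1 : Cz → ¬ Czu → ¬ Czv → False := by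
    intro hCz hCzu hCzv
    rw [hCzu_def] at hCzu
    rw [hCzv_def] at hCzv
    push_neg at hCzu hCzv
    obtain ⟨a, ha, b, hb, cu, hcumem, hcu⟩ := hCzu
    obtain ⟨a', ha', b', hb', cv, hcvmem, hcv⟩ := hCzv
    have hcuu : cu = u := by
      rcases Finset.mem_insert.mp hcumem with h | h
      · exact h
      · exact absurd hcu (not_lt.mpr (hCz a ha b hb cu h))
    have hcvv : cv = v := by
      rcases Finset.mem_insert.mp hcvmem with h | h
      · exact h
      · exact absurd hcv (not_lt.mpr (hCz a' ha' b' hb' cv h))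
    rw [hcuu] at hcu
    rw [hcvv] at hcv
    obtain ⟨hua, hub⟩ := max_lt_iff.mp hcu
    obtain ⟨hva', hvb'⟩ := max_lt_iff.mp hcv
    have hfinal : ∀ t ∈ y, dist c₀ t < dist t v → dist c₀ v < dist t v → False := by
      intro t ht g1 g2
      have h1' : dist c₀ v < dist v t := by rw [dist_comm v t]; exact g2
      have h2' : dist c₀ t < dist v t := by rw [dist_comm v t]; exact g1
      rcases RL h4pt a' b' v t c₀ h1' h2' hva' hvb' with ⟨k1, k2⟩ | ⟨k1, k2⟩ | ⟨k1, k2⟩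
      · have hk := hCz a' ha' t ht c₀ hc₀z
        rcases le_max_iff.mp hk with h | h <;> linarith
      · have hk := hCz b' hb' t ht c₀ hc₀z
        rcases le_max_iff.mp hk with h | h <;> linarith
      · have hk := hCz a' ha' b' hb' c₀ hc₀z
        rcases le_max_iff.mp hk with h | h <;> linarith
    rcases RL h4pt a b u v c₀ hc₀u hc₀v hua hub with ⟨g1, g2⟩ | ⟨g1, g2⟩ | ⟨g1, g2⟩
    · exact hfinal a ha g1 g2
    · exact hfinal b hb g1 g2
    · have hk := hCz a ha b hb c₀ hc₀z
      rcases le_max_iff.mp hk with h | h <;> linarith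
  -- final case analysis
  by_cases hCzu : Czu <;> by_cases hCzv : Czv
  · rw [if_pos hCzu, if_pos hCzv, if_pos (mono_u hCzu), if_pos (hcomb hCzu hCzv)]
  · rw [if_pos hCzu, if_neg hCzv, if_pos (mono_u hCzu),
      if_neg (fun h => hCzv (mono_xv h))]
  · rw [if_neg hCzu, if_pos hCzv, if_pos (mono_v hCzv),
      if_neg (fun h => hCzu (mono_xu h))]
  · by_cases hCz : Cz
    · exact (hclaim1 hCz hCzu hCzv).elim
    · rw [if_neg hCzu, if_neg hCzv, if_neg hCz,
        if_neg (fun h => hCz (mono_u (mono_xu h)))]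
end

section
/- Let L be the linear network formed by the three sides of the triangle with vertices (-1,0), (1,0), (0,1) in R², with the shortest-path metric along the network. Then there exists a three-point configuration z ⊂ L (one point in the interior of each edge) such that z is a Delaunay clique in itself, but for every additional point u ∈ L \ z, z is not a clique in z ∪ {u} even though some point of z is not a Delaunay neighbour of u in z ∪ {u}; consequently the Baddeley–Møller consistency condition (C1) fails for the Delaunay relation on this network. -/
/-!
Going once around the triangle by arclength identifies the network with a circle of
circumference `2 + 2√2`, and the geodesic distance with the arc distance on that circle. The
lower bound is the only non-trivial part: the image of a path is connected, so a path between
points of different sides passes through a vertex, and is at least as long as the two pieces.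

On a circle any three points are pairwise Delaunay neighbours (the midpoint of an arc between two
of them lies in both their cells), whereas of four points in cyclic order the two opposite pairs
are not. For `z` at the arclength parameters `1`, `3`, `2 + 2√2 - 1`, an extra point `u` splits
one of the three arcs: the pair spanning that arc stops being a clique pair, and the point of `z`
opposite to `u` is not a neighbour of `u`.
-/

open scoped Classical ENNReal

noncomputable section

/-- The triangle network: the three sides of the triangle with vertices
(-1,0), (1,0), (0,1) in the plane, realized in ℂ as -1, 1, I. -/
def Tri : Set ℂ := segment ℝ (-1) 1 ∪ segment ℝ 1 Complex.I ∪ segment ℝ (-1) Complex.I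

/-- Shortest-path (geodesic) distance along the network: the infimum of the lengths
(total variations) of continuous paths in the network between the two points. -/
def netDist (x y : Tri) : ℝ≥0∞ :=
  ⨅ γ : Path x y, eVariationOn (fun t : ℝ => ((γ.extend t : Tri) : ℂ)) (Set.Icc 0 1)

def cellN (x : Finset Tri) (y : Tri) : Set Tri :=
  {ξ | ∀ z ∈ x, netDist ξ y ≤ netDist ξ z}

def DelN (x : Finset Tri) (a b : Tri) : Prop := (cellN x a ∩ cellN x b).Nonempty

def CliqueN (x y : Finset Tri) : Prop := ∀ a ∈ y, ∀ b ∈ y, DelN x a b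

open Set Real

/-- Distance along a circle of circumference `L` between the points with arclength parameters
`s, t ∈ [0, L]` (outside that range it is not a distance). -/
def circDist (L s t : ℝ) : ℝ := min |s - t| (L - |s - t|)

section circDist

variable {L p q s t u v : ℝ}

lemma circDist_comm (L s t : ℝ) : circDist L s t = circDist L t s := by
  rw [circDist, circDist, abs_sub_comm]

lemma circDist_le_abs_sub (L s t : ℝ) : circDist L s t ≤ |s - t| := min_le_left _ _

lemma circDist_nonneg (hs : s ∈ Icc 0 L) (ht : t ∈ Icc 0 L) : 0 ≤ circDist L s t :=
  le_min (abs_nonneg _)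
    (by rw [sub_nonneg, abs_le]; constructor <;> linarith [hs.1, hs.2, ht.1, ht.2])

lemma circDist_pos (hst : s ≠ t) (hlt : |s - t| < L) : 0 < circDist L s t :=
  lt_min (abs_pos.2 (sub_ne_zero.2 hst)) (by linarith)

lemma circDist_zero_left (ht : t ∈ Icc 0 L) : circDist L 0 t = circDist L L t := by
  rw [circDist, circDist, abs_of_nonpos (by linarith [ht.1]), abs_of_nonneg (by linarith [ht.2]),
    min_comm]
  ring_nf

lemma circDist_reflect (L s t : ℝ) : circDist L (L - s) (L - t) = circDist L s t := by
  rw [circDist, circDist, show L - s - (L - t) = t - s by ring, abs_sub_comm]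

lemma circDist_cases (L s t : ℝ) :
    (circDist L s t = s - t ∧ t ≤ s ∧ s - t ≤ L - (s - t)) ∨
    (circDist L s t = t - s ∧ s ≤ t ∧ t - s ≤ L - (t - s)) ∨
    (circDist L s t = L - (s - t) ∧ t ≤ s ∧ L - (s - t) ≤ s - t) ∨
    (circDist L s t = L - (t - s) ∧ s ≤ t ∧ L - (t - s) ≤ t - s) := by
  rcases abs_cases (s - t) with ⟨e, he⟩ | ⟨e, he⟩ <;> rw [circDist, e]
  · rcases min_cases (s - t) (L - (s - t)) with ⟨m, hm⟩ | ⟨m, hm⟩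
    · exact Or.inl ⟨m, by linarith, by linarith⟩
    · exact Or.inr (Or.inr (Or.inl ⟨m, by linarith, by linarith⟩))
  · rcases min_cases (-(s - t)) (L - -(s - t)) with ⟨m, hm⟩ | ⟨m, hm⟩
    · exact Or.inr (Or.inl ⟨by linarith, by linarith, by linarith⟩)
    · exact Or.inr (Or.inr (Or.inr ⟨by linarith, by linarith, by linarith⟩))

lemma circDist_triangle (hs : s ∈ Icc 0 L) (ht : t ∈ Icc 0 L) (hu : u ∈ Icc 0 L) :
    circDist L s u ≤ circDist L s t + circDist L t u := by
  obtain ⟨hs0, hsL⟩ := hs; obtain ⟨ht0, htL⟩ := ht; obtain ⟨hu0, huL⟩ := hu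
  unfold circDist
  rcases min_choice |s - t| (L - |s - t|) with h | h <;> rw [h] <;>
  rcases min_choice |t - u| (L - |t - u|) with h' | h' <;> rw [h'] <;> refine min_le_iff.2 ?_ <;>
  rcases abs_cases (s - u) with ⟨e₁, h₁⟩ | ⟨e₁, h₁⟩ <;>
  rcases abs_cases (s - t) with ⟨e₂, h₂⟩ | ⟨e₂, h₂⟩ <;>
  rcases abs_cases (t - u) with ⟨e₃, h₃⟩ | ⟨e₃, h₃⟩ <;> rw [e₁, e₂, e₃] <;>
  first | (left; linarith) | (right; linarith)

lemma min_circDist_lt_max_circDist {q₁ q₂ q₃ q₄ : ℝ} (h₁₂ : q₁ < q₂) (h₂₃ : q₂ < q₃)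
    (h₃₄ : q₃ < q₄) (hwrap : q₄ - q₁ < L) (hv : v ∈ Icc 0 L) :
    min (circDist L v q₂) (circDist L v q₄) < max (circDist L v q₁) (circDist L v q₃) := by
  obtain ⟨hv0, hvL⟩ := hv
  rw [lt_max_iff, min_lt_iff, min_lt_iff]
  by_contra! h
  rcases circDist_cases L v q₁ with ⟨e₁, u₁⟩ | ⟨e₁, u₁⟩ | ⟨e₁, u₁⟩ | ⟨e₁, u₁⟩ <;>
  rcases circDist_cases L v q₂ with ⟨e₂, u₂⟩ | ⟨e₂, u₂⟩ | ⟨e₂, u₂⟩ | ⟨e₂, u₂⟩ <;>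
  rcases circDist_cases L v q₃ with ⟨e₃, u₃⟩ | ⟨e₃, u₃⟩ | ⟨e₃, u₃⟩ | ⟨e₃, u₃⟩ <;>
  rcases circDist_cases L v q₄ with ⟨e₄, u₄⟩ | ⟨e₄, u₄⟩ | ⟨e₄, u₄⟩ | ⟨e₄, u₄⟩ <;>
  simp only [e₁, e₂, e₃, e₄] at h <;>
  linarith [h.1.1, h.1.2, h.2.1, h.2.2, u₁.1, u₁.2, u₂.1, u₂.2, u₃.1, u₃.2, u₄.1, u₄.2]

lemma min_circDist_lt_max_circDist' {q₁ q₂ q₃ q₄ : ℝ} (h₁₂ : q₁ < q₂) (h₂₃ : q₂ < q₃)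
    (h₃₄ : q₃ < q₄) (hwrap : q₄ - q₁ < L) (hv : v ∈ Icc 0 L) :
    min (circDist L v q₁) (circDist L v q₃) < max (circDist L v q₂) (circDist L v q₄) := by
  have := min_circDist_lt_max_circDist (L := L) (v := L - v) (q₁ := L - q₄) (q₂ := L - q₃)
    (q₃ := L - q₂) (q₄ := L - q₁) (by linarith) (by linarith) (by linarith)
    (by linarith) ⟨by linarith [hv.2], by linarith [hv.1]⟩
  simp only [circDist_reflect] at this
  rwa [min_comm, max_comm]

lemma exists_circDist_le_of_notMem_Ioo (hp : 0 ≤ p) (hpq : p ≤ q) (hq : q ≤ L) :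
    ∃ v ∈ Icc 0 L, ∀ r ∈ Icc 0 L, r ∉ Ioo p q →
      circDist L v p ≤ circDist L v r ∧ circDist L v q ≤ circDist L v r := by
  refine ⟨(p + q) / 2, ⟨by linarith, by linarith⟩, fun r ⟨hr₀, hrL⟩ hr => ?_⟩
  rw [mem_Ioo, not_and_or, not_lt, not_lt] at hr
  have hvp : circDist L ((p + q) / 2) p = (q - p) / 2 := by
    rcases circDist_cases L ((p + q) / 2) p with ⟨e, u⟩ | ⟨e, u⟩ | ⟨e, u⟩ | ⟨e, u⟩ <;>
      linarith [u.1, u.2]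
  have hvq : circDist L ((p + q) / 2) q = (q - p) / 2 := by
    rcases circDist_cases L ((p + q) / 2) q with ⟨e, u⟩ | ⟨e, u⟩ | ⟨e, u⟩ | ⟨e, u⟩ <;>
      linarith [u.1, u.2]
  rw [hvp, hvq, and_self]
  rcases circDist_cases L ((p + q) / 2) r with ⟨e, u⟩ | ⟨e, u⟩ | ⟨e, u⟩ | ⟨e, u⟩ <;>
    rcases hr with hr | hr <;> linarith [u.1, u.2]

lemma exists_circDist_le_of_mem_Icc (hp : 0 ≤ p) (hpq : p ≤ q) (hq : q ≤ L) :
    ∃ v ∈ Icc 0 L, ∀ r ∈ Icc p q,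
      circDist L v p ≤ circDist L v r ∧ circDist L v q ≤ circDist L v r := by
  -- `v` is the point antipodal to the midpoint of `[p, q]`
  have key : ∀ v, v ∈ Icc 0 L → (2 * v = p + q - L ∨ 2 * v = p + q + L) → ∀ r ∈ Icc p q,
      circDist L v p ≤ circDist L v r ∧ circDist L v q ≤ circDist L v r := by
    intro v ⟨hv₀, hvL⟩ hv r ⟨hpr, hrq⟩
    have hvp : circDist L v p = (L - (q - p)) / 2 := by
      rcases circDist_cases L v p with ⟨e, u⟩ | ⟨e, u⟩ | ⟨e, u⟩ | ⟨e, u⟩ <;>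
        rcases hv with hv | hv <;> linarith [u.1, u.2]
    have hvq : circDist L v q = (L - (q - p)) / 2 := by
      rcases circDist_cases L v q with ⟨e, u⟩ | ⟨e, u⟩ | ⟨e, u⟩ | ⟨e, u⟩ <;>
        rcases hv with hv | hv <;> linarith [u.1, u.2]
    rw [hvp, hvq, and_self]
    rcases circDist_cases L v r with ⟨e, u⟩ | ⟨e, u⟩ | ⟨e, u⟩ | ⟨e, u⟩ <;>
      rcases hv with hv | hv <;> linarith [u.1, u.2]
  rcases le_total L (p + q) with h | h
  · exact ⟨(p + q - L) / 2, ⟨by linarith, by linarith⟩,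
      key _ ⟨by linarith, by linarith⟩ (Or.inl (by ring))⟩
  · exact ⟨(p + q + L) / 2, ⟨by linarith, by linarith⟩,
      key _ ⟨by linarith, by linarith⟩ (Or.inr (by ring))⟩

end circDist

lemma isClosed_segment {E : Type*} [AddCommGroup E] [Module ℝ E] [TopologicalSpace E]
    [ContinuousAdd E] [ContinuousSMul ℝ E] [T2Space E] (x y : E) : IsClosed (segment ℝ x y) := by
  rw [segment_eq_image]
  exact (isCompact_Icc.image (by fun_prop)).isClosed

def pathCurve {x y : Tri} (γ : Path x y) (t : ℝ) : ℂ := γ.extend t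

lemma netDist_eq_iInf (x y : Tri) :
    netDist x y = ⨅ γ : Path x y, eVariationOn (pathCurve γ) (Icc 0 1) := rfl

lemma eVariationOn_symm_le {x y : Tri} (γ : Path x y) :
    eVariationOn (pathCurve γ.symm) (Icc 0 1) ≤ eVariationOn (pathCurve γ) (Icc 0 1) := by
  have h : pathCurve γ.symm = pathCurve γ ∘ (fun t => 1 - t) := by
    ext1 t; simp [pathCurve, Path.extend_symm_apply]
  rw [h]
  exact eVariationOn.comp_le_of_antitoneOn _ _ (fun u _ v _ huv => by linarith)
    (fun u hu => ⟨by linarith [hu.2], by linarith [hu.1]⟩)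

lemma netDist_comm (x y : Tri) : netDist x y = netDist y x := by
  have key : ∀ a b : Tri, netDist b a ≤ netDist a b := fun a b =>
    le_iInf fun γ => iInf_le_of_le γ.symm (eVariationOn_symm_le γ)
  exact le_antisymm (key y x) (key x y)

lemma eVariationOn_trans_le {x y z : Tri} (γ₁ : Path x y) (γ₂ : Path y z) :
    eVariationOn (pathCurve (γ₁.trans γ₂)) (Icc 0 1) ≤
      eVariationOn (pathCurve γ₁) (Icc 0 1) + eVariationOn (pathCurve γ₂) (Icc 0 1) := by
  have hsplit := eVariationOn.Icc_add_Icc (pathCurve (γ₁.trans γ₂)) (s := univ)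
    (by norm_num : (0 : ℝ) ≤ 1 / 2) (by norm_num : (1 / 2 : ℝ) ≤ 1) (mem_univ _)
  simp only [univ_inter] at hsplit
  rw [← hsplit]
  gcongr
  · have h : EqOn (pathCurve (γ₁.trans γ₂)) (pathCurve γ₁ ∘ fun t => 2 * t) (Icc 0 (1 / 2)) :=
      fun t ht => by simp [pathCurve, Path.extend_trans_of_le_half _ _ ht.2]
    rw [eVariationOn.eq_of_eqOn h]
    exact eVariationOn.comp_le_of_monotoneOn _ _ (fun u _ v _ huv => by linarith)
      (fun u hu => ⟨by linarith [hu.1], by linarith [hu.2]⟩)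
  · have h : EqOn (pathCurve (γ₁.trans γ₂)) (pathCurve γ₂ ∘ fun t => 2 * t - 1) (Icc (1 / 2) 1) :=
      fun t ht => by simp [pathCurve, Path.extend_trans_of_half_le _ _ ht.1]
    rw [eVariationOn.eq_of_eqOn h]
    exact eVariationOn.comp_le_of_monotoneOn _ _ (fun u _ v _ huv => by linarith)
      (fun u hu => ⟨by linarith [hu.1], by linarith [hu.2]⟩)

lemma netDist_triangle (x y z : Tri) : netDist x z ≤ netDist x y + netDist y z := by
  rw [netDist_eq_iInf, netDist_eq_iInf, netDist_eq_iInf, ENNReal.iInf_add]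
  refine le_iInf fun γ₁ => ?_
  rw [ENNReal.add_iInf]
  exact le_iInf fun γ₂ => iInf_le_of_le (γ₁.trans γ₂) (eVariationOn_trans_le γ₁ γ₂)

def segmentPath (x y : Tri) (h : segment ℝ (x : ℂ) y ⊆ Tri) : Path x y where
  toFun t := ⟨(x : ℂ) + (t : ℝ) • ((y : ℂ) - x), h (by
    rw [segment_eq_image']
    exact ⟨t, t.2, rfl⟩)⟩
  continuous_toFun := by fun_prop
  source' := by ext; simp
  target' := by ext; simp

lemma netDist_le_edist {x y : Tri} (h : segment ℝ (x : ℂ) y ⊆ Tri) :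
    netDist x y ≤ edist (x : ℂ) y := by
  rw [netDist_eq_iInf]
  refine iInf_le_of_le (segmentPath x y h) ?_
  have heq : EqOn (pathCurve (segmentPath x y h)) (fun t : ℝ => (x : ℂ) + t • ((y : ℂ) - x))
      (Icc 0 1) := fun t ht => by
    simp only [pathCurve, Path.extend_apply _ ht]; rfl
  rw [eVariationOn.eq_of_eqOn heq]
  have hlip : LipschitzWith ‖(y : ℂ) - x‖₊ (fun t : ℝ => (x : ℂ) + t • ((y : ℂ) - x)) :=
    LipschitzWith.of_dist_le_mul fun a b => by
      rw [dist_eq_norm, dist_eq_norm, add_sub_add_left_eq_sub, ← sub_smul, norm_smul, mul_comm]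
      simp
  calc eVariationOn (fun t : ℝ => (x : ℂ) + t • ((y : ℂ) - x)) (Icc 0 1)
      ≤ ‖(y : ℂ) - x‖₊ * eVariationOn id (Icc (0 : ℝ) 1) :=
        (hlip.lipschitzOnWith (s := univ)).comp_eVariationOn_le (mapsTo_univ _ _)
    _ ≤ ‖(y : ℂ) - x‖₊ * ENNReal.ofReal (1 - 0) := by
        gcongr
        simp
    _ = edist (x : ℂ) y := by simp [edist_comm (x : ℂ), edist_eq_enorm_sub, enorm_eq_nnnorm]

lemma netDist_self (x : Tri) : netDist x x = 0 :=
  le_antisymm ((netDist_le_edist (by rw [segment_same]; exact singleton_subset_iff.2 x.2)).trans_eq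
    (edist_self _)) zero_le

def bottomSide : Set ℂ := segment ℝ (-1) 1
def rightSide : Set ℂ := segment ℝ 1 Complex.I
def leftSide : Set ℂ := segment ℝ (-1) Complex.I

lemma tri_eq : Tri = bottomSide ∪ rightSide ∪ leftSide := rfl

lemma mem_bottomSide {z : ℂ} : z ∈ bottomSide ↔ z.im = 0 ∧ -1 ≤ z.re ∧ z.re ≤ 1 := by
  rw [bottomSide, segment_eq_image]
  constructor
  · rintro ⟨t, ⟨h0, h1⟩, rfl⟩
    refine ⟨by simp, ?_, ?_⟩ <;> simp <;> linarith
  · rintro ⟨h1, h2, h3⟩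
    refine ⟨(z.re + 1) / 2, ⟨by linarith, by linarith⟩, ?_⟩
    apply Complex.ext <;> simp [h1]; ring

lemma mem_rightSide {z : ℂ} : z ∈ rightSide ↔ z.re + z.im = 1 ∧ 0 ≤ z.im ∧ z.im ≤ 1 := by
  rw [rightSide, segment_eq_image]
  constructor
  · rintro ⟨t, ⟨h0, h1⟩, rfl⟩
    refine ⟨?_, ?_, ?_⟩ <;> simp <;> linarith
  · rintro ⟨h1, h2, h3⟩
    refine ⟨z.im, ⟨h2, h3⟩, ?_⟩
    apply Complex.ext <;> simp; linarith

lemma mem_leftSide {z : ℂ} : z ∈ leftSide ↔ z.im - z.re = 1 ∧ 0 ≤ z.im ∧ z.im ≤ 1 := by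
  rw [leftSide, segment_eq_image]
  constructor
  · rintro ⟨t, ⟨h0, h1⟩, rfl⟩
    refine ⟨?_, ?_, ?_⟩ <;> simp <;> linarith
  · rintro ⟨h1, h2, h3⟩
    refine ⟨z.im, ⟨h2, h3⟩, ?_⟩
    apply Complex.ext <;> simp; linarith

lemma bottomSide_inter_subset : bottomSide ∩ (rightSide ∪ leftSide) ⊆ {-1, 1} := by
  rintro z ⟨hB, hR | hL⟩ <;> rw [mem_bottomSide] at hB
  · rw [mem_rightSide] at hR
    right; apply Complex.ext <;> simp <;> linarith
  · rw [mem_leftSide] at hL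
    left; apply Complex.ext <;> simp <;> linarith

lemma rightSide_inter_subset : rightSide ∩ (bottomSide ∪ leftSide) ⊆ {1, Complex.I} := by
  rintro z ⟨hR, hB | hL⟩ <;> rw [mem_rightSide] at hR
  · rw [mem_bottomSide] at hB
    left; apply Complex.ext <;> simp <;> linarith
  · rw [mem_leftSide] at hL
    right; apply Complex.ext <;> simp <;> linarith

lemma leftSide_inter_subset : leftSide ∩ (bottomSide ∪ rightSide) ⊆ {-1, Complex.I} := by
  rintro z ⟨hL, hB | hR⟩ <;> rw [mem_leftSide] at hL
  · rw [mem_bottomSide] at hB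
    left; apply Complex.ext <;> simp <;> linarith
  · rw [mem_rightSide] at hR
    right; apply Complex.ext <;> simp <;> linarith

def perim : ℝ := 2 + 2 * √2

lemma four_lt_perim : 4 < perim := by unfold perim; linarith [one_lt_sqrt_two]

lemma two_mem_Icc_perim : (2 : ℝ) ∈ Icc 0 perim := ⟨zero_le_two, by linarith [four_lt_perim]⟩

lemma two_add_sqrt_two_mem_Icc_perim : 2 + √2 ∈ Icc 0 perim :=
  ⟨by positivity, by unfold perim; linarith [sqrt_nonneg 2]⟩

lemma zero_mem_Icc_perim : (0 : ℝ) ∈ Icc 0 perim := left_mem_Icc.2 (by linarith [four_lt_perim])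

lemma perim_mem_Icc_perim : perim ∈ Icc 0 perim := right_mem_Icc.2 (by linarith [four_lt_perim])

/-- Arclength parametrization of the network, starting at `-1` and running through `1` and `I`. -/
def arcPoint (t : ℝ) : ℂ :=
  if t ≤ 2 then ⟨t - 1, 0⟩
  else if t ≤ 2 + √2 then ⟨1 - (t - 2) / √2, (t - 2) / √2⟩
  else ⟨(perim - t) / √2 - 1, (perim - t) / √2⟩

lemma arcPoint_of_le_two {t : ℝ} (h : t ≤ 2) : arcPoint t = ⟨t - 1, 0⟩ := if_pos h

lemma arcPoint_of_mem_right {t : ℝ} (h₁ : 2 ≤ t) (h₂ : t ≤ 2 + √2) :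
    arcPoint t = ⟨1 - (t - 2) / √2, (t - 2) / √2⟩ := by
  rcases h₁.eq_or_lt with rfl | h
  · rw [arcPoint, if_pos le_rfl]; norm_num
  · rw [arcPoint, if_neg h.not_ge, if_pos h₂]

lemma arcPoint_of_two_add_sqrt_two_le {t : ℝ} (h : 2 + √2 ≤ t) :
    arcPoint t = ⟨(perim - t) / √2 - 1, (perim - t) / √2⟩ := by
  have hs := sqrt_pos.2 (two_pos (α := ℝ))
  rcases h.eq_or_lt with rfl | h
  · rw [arcPoint, if_neg (by linarith), if_pos le_rfl]
    apply Complex.ext <;> simp [perim] <;> field_simp <;> ring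
  · rw [arcPoint, if_neg (by linarith), if_neg h.not_ge]

lemma arcPoint_zero : arcPoint 0 = -1 := by
  rw [arcPoint_of_le_two zero_le_two]; apply Complex.ext <;> simp

lemma arcPoint_two : arcPoint 2 = 1 := by
  rw [arcPoint_of_le_two le_rfl]; apply Complex.ext <;> simp; norm_num

lemma arcPoint_two_add_sqrt_two : arcPoint (2 + √2) = Complex.I := by
  rw [arcPoint_of_mem_right (by linarith [sqrt_nonneg 2]) le_rfl]
  apply Complex.ext <;> simp [(sqrt_pos.2 two_pos).ne']

lemma arcPoint_perim : arcPoint perim = -1 := by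
  rw [arcPoint_of_two_add_sqrt_two_le (by unfold perim; linarith [sqrt_nonneg 2])]
  apply Complex.ext <;> simp

lemma arcPoint_mem_bottomSide {t : ℝ} (ht : t ∈ Icc 0 2) : arcPoint t ∈ bottomSide := by
  rw [arcPoint_of_le_two ht.2, mem_bottomSide]
  exact ⟨rfl, by simp; linarith [ht.1], by simp; linarith [ht.2]⟩

lemma arcPoint_mem_rightSide {t : ℝ} (ht : t ∈ Icc 2 (2 + √2)) : arcPoint t ∈ rightSide := by
  have hs := sqrt_pos.2 (two_pos (α := ℝ))
  rw [arcPoint_of_mem_right ht.1 ht.2, mem_rightSide]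
  refine ⟨by simp, div_nonneg (by linarith [ht.1]) hs.le, ?_⟩
  rw [div_le_one hs]; linarith [ht.2]

lemma arcPoint_mem_leftSide {t : ℝ} (ht : t ∈ Icc (2 + √2) perim) : arcPoint t ∈ leftSide := by
  have hs := sqrt_pos.2 (two_pos (α := ℝ))
  rw [arcPoint_of_two_add_sqrt_two_le ht.1, mem_leftSide]
  refine ⟨by simp, div_nonneg (by linarith [ht.2]) hs.le, ?_⟩
  rw [div_le_one hs]; unfold perim at ht ⊢; linarith [ht.1]

lemma arcPoint_mem_tri {t : ℝ} (ht : t ∈ Icc 0 perim) : arcPoint t ∈ Tri := by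
  rcases le_or_gt t 2 with h₂ | h₂
  · exact Or.inl (Or.inl (arcPoint_mem_bottomSide ⟨ht.1, h₂⟩))
  rcases le_or_gt t (2 + √2) with h₃ | h₃
  · exact Or.inl (Or.inr (arcPoint_mem_rightSide ⟨h₂.le, h₃⟩))
  · exact Or.inr (arcPoint_mem_leftSide ⟨h₃.le, ht.2⟩)

lemma arcPoint_mem_openSegment_bottom {t : ℝ} (ht : t ∈ Ioo 0 2) :
    arcPoint t ∈ openSegment ℝ (-1) 1 := by
  rw [arcPoint_of_le_two ht.2.le, openSegment_eq_image]
  refine ⟨t / 2, ⟨by linarith [ht.1], by linarith [ht.2]⟩, ?_⟩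
  apply Complex.ext <;> simp; ring

lemma arcPoint_mem_openSegment_right {t : ℝ} (ht : t ∈ Ioo 2 (2 + √2)) :
    arcPoint t ∈ openSegment ℝ 1 Complex.I := by
  have hs := sqrt_pos.2 (two_pos (α := ℝ))
  rw [arcPoint_of_mem_right ht.1.le ht.2.le, openSegment_eq_image]
  refine ⟨(t - 2) / √2, ⟨div_pos (by linarith [ht.1]) hs, (div_lt_one hs).2 (by linarith [ht.2])⟩,
    ?_⟩
  apply Complex.ext <;> simp

lemma arcPoint_mem_openSegment_left {t : ℝ} (ht : t ∈ Ioo (2 + √2) perim) :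
    arcPoint t ∈ openSegment ℝ (-1) Complex.I := by
  have hs := sqrt_pos.2 (two_pos (α := ℝ))
  rw [arcPoint_of_two_add_sqrt_two_le ht.1.le, openSegment_eq_image]
  refine ⟨(perim - t) / √2, ⟨div_pos (by linarith [ht.2]) hs,
    (div_lt_one hs).2 (by unfold perim at ht ⊢; linarith [ht.1])⟩, ?_⟩
  apply Complex.ext <;> simp

lemma exists_arcPoint_eq {z : ℂ} (hz : z ∈ Tri) : ∃ t ∈ Icc 0 perim, arcPoint t = z := by
  have hs := sqrt_pos.2 (two_pos (α := ℝ))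
  have hs2 : √2 * √2 = 2 := mul_self_sqrt zero_le_two
  rcases hz with (h | h) | h
  · obtain ⟨him, h₁, h₂⟩ := mem_bottomSide.1 h
    refine ⟨z.re + 1, ⟨by linarith, by unfold perim; linarith⟩, ?_⟩
    rw [arcPoint_of_le_two (by linarith)]
    apply Complex.ext <;> simp [him]
  · obtain ⟨hre, h₁, h₂⟩ := mem_rightSide.1 h
    refine ⟨2 + √2 * z.im, ⟨by positivity, by unfold perim; nlinarith⟩, ?_⟩
    rw [arcPoint_of_mem_right (by nlinarith) (by nlinarith)]
    apply Complex.ext <;> simp; linarith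
  · obtain ⟨hre, h₁, h₂⟩ := mem_leftSide.1 h
    refine ⟨perim - √2 * z.im, ⟨by unfold perim; nlinarith, by nlinarith⟩, ?_⟩
    rw [arcPoint_of_two_add_sqrt_two_le (by unfold perim; nlinarith)]
    apply Complex.ext <;> simp; linarith

def OnCommonSide (s t : ℝ) : Prop :=
  (s ∈ Icc 0 2 ∧ t ∈ Icc 0 2) ∨ (s ∈ Icc 2 (2 + √2) ∧ t ∈ Icc 2 (2 + √2)) ∨
    (s ∈ Icc (2 + √2) perim ∧ t ∈ Icc (2 + √2) perim)

lemma OnCommonSide.mem_Icc {s t : ℝ} (h : OnCommonSide s t) :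
    s ∈ Icc 0 perim ∧ t ∈ Icc 0 perim := by
  have := four_lt_perim
  have := sqrt_two_lt_three_halves
  have := sqrt_nonneg 2
  rcases h with ⟨⟨h₁, h₂⟩, h₃, h₄⟩ | ⟨⟨h₁, h₂⟩, h₃, h₄⟩ | ⟨⟨h₁, h₂⟩, h₃, h₄⟩ <;>
    exact ⟨⟨by linarith, by linarith⟩, by linarith, by linarith⟩

lemma dist_arcPoint {s t : ℝ} (h : OnCommonSide s t) :
    dist (arcPoint s) (arcPoint t) = |s - t| := by
  have := sqrt_pos.2 (two_pos (α := ℝ))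
  rw [Complex.dist_eq_re_im, ← sqrt_sq_eq_abs]
  congr 1
  rcases h with ⟨hs, ht⟩ | ⟨hs, ht⟩ | ⟨hs, ht⟩
  · rw [arcPoint_of_le_two hs.2, arcPoint_of_le_two ht.2]; simp
  · rw [arcPoint_of_mem_right hs.1 hs.2, arcPoint_of_mem_right ht.1 ht.2]
    field_simp; ring_nf; rw [sq_sqrt zero_le_two]; ring
  · rw [arcPoint_of_two_add_sqrt_two_le hs.1, arcPoint_of_two_add_sqrt_two_le ht.1]
    field_simp; ring_nf; rw [sq_sqrt zero_le_two]; ring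

lemma segment_arcPoint_subset {s t : ℝ} (h : OnCommonSide s t) :
    segment ℝ (arcPoint s) (arcPoint t) ⊆ Tri := by
  rcases h with ⟨hs, ht⟩ | ⟨hs, ht⟩ | ⟨hs, ht⟩
  · exact ((convex_segment _ _).segment_subset (arcPoint_mem_bottomSide hs)
      (arcPoint_mem_bottomSide ht)).trans (subset_union_left.trans subset_union_left)
  · exact ((convex_segment _ _).segment_subset (arcPoint_mem_rightSide hs)
      (arcPoint_mem_rightSide ht)).trans (subset_union_right.trans subset_union_left)
  · exact ((convex_segment _ _).segment_subset (arcPoint_mem_leftSide hs)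
      (arcPoint_mem_leftSide ht)).trans subset_union_right

def LengthBound (s t : ℝ) : Prop :=
  ∀ ⦃F : ℝ → ℂ⦄ ⦃a b : ℝ⦄, a ≤ b → ContinuousOn F (Icc a b) → MapsTo F (Icc a b) Tri →
    F a = arcPoint s → F b = arcPoint t →
      ENNReal.ofReal (circDist perim s t) ≤ eVariationOn F (Icc a b)

lemma exists_apply_mem_inter {X : Type*} [TopologicalSpace X] {E U : Set X} (hE : IsClosed E)
    (hU : IsClosed U) {F : ℝ → X} {a b : ℝ} (hab : a ≤ b) (hF : ContinuousOn F (Icc a b))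
    (hEU : MapsTo F (Icc a b) (E ∪ U)) (ha : F a ∈ E) (hb : F b ∈ U) :
    ∃ r ∈ Icc a b, F r ∈ E ∩ U := by
  obtain ⟨_, ⟨r, hr, rfl⟩, hrEU⟩ := isPreconnected_closed_iff.1 (isPreconnected_Icc.image F hF)
    E U hE hU (image_subset_iff.2 hEU) ⟨F a, mem_image_of_mem F (left_mem_Icc.2 hab), ha⟩
    ⟨F b, mem_image_of_mem F (right_mem_Icc.2 hab), hb⟩
  exact ⟨r, hr, hrEU⟩

namespace LengthBound

variable {s t s' t' : ℝ}

lemma of_onCommonSide (h : OnCommonSide s t) : LengthBound s t := by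
  intro F a b hab _ _ hFa hFb
  calc ENNReal.ofReal (circDist perim s t) ≤ ENNReal.ofReal |s - t| :=
        ENNReal.ofReal_le_ofReal (circDist_le_abs_sub _ _ _)
    _ = edist (F a) (F b) := by rw [hFa, hFb, edist_dist, dist_arcPoint h]
    _ ≤ eVariationOn F (Icc a b) :=
        eVariationOn.edist_le F (left_mem_Icc.2 hab) (right_mem_Icc.2 hab)

lemma of_eq (hs : arcPoint s' = arcPoint s) (ht : arcPoint t' = arcPoint t)
    (hd : circDist perim s' t' = circDist perim s t) (h : LengthBound s t) : LengthBound s' t' := by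
  intro F a b hab hF hT hFa hFb
  rw [hd]
  exact h hab hF hT (hFa.trans hs) (hFb.trans ht)

lemma zero_left_of_perim_left (ht : t ∈ Icc 0 perim) (h : LengthBound perim t) :
    LengthBound 0 t :=
  h.of_eq (arcPoint_zero.trans arcPoint_perim.symm) rfl (circDist_zero_left ht)

lemma perim_left_of_zero_left (ht : t ∈ Icc 0 perim) (h : LengthBound 0 t) :
    LengthBound perim t :=
  h.of_eq (arcPoint_perim.trans arcPoint_zero.symm) rfl (circDist_zero_left ht).symm

lemma zero_right_of_perim_right (hs : s ∈ Icc 0 perim) (h : LengthBound s perim) :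
    LengthBound s 0 :=
  h.of_eq rfl (arcPoint_zero.trans arcPoint_perim.symm)
    (by rw [circDist_comm, circDist_zero_left hs, circDist_comm])

lemma perim_right_of_zero_right (hs : s ∈ Icc 0 perim) (h : LengthBound s 0) :
    LengthBound s perim :=
  h.of_eq rfl (arcPoint_perim.trans arcPoint_zero.symm)
    (by rw [circDist_comm, ← circDist_zero_left hs, circDist_comm])

lemma ofReal_circDist_le_of_apply_eq {v : ℝ} (hs : s ∈ Icc 0 perim) (ht : t ∈ Icc 0 perim)
    (hv : v ∈ Icc 0 perim) (hsv : LengthBound s v) (hvt : LengthBound v t) {F : ℝ → ℂ} {a b r : ℝ}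
    (hr : r ∈ Icc a b) (hF : ContinuousOn F (Icc a b)) (hT : MapsTo F (Icc a b) Tri)
    (hFa : F a = arcPoint s) (hFr : F r = arcPoint v) (hFb : F b = arcPoint t) :
    ENNReal.ofReal (circDist perim s t) ≤ eVariationOn F (Icc a b) := by
  obtain ⟨har, hrb⟩ := hr
  have hsplit := eVariationOn.Icc_add_Icc F (s := univ) har hrb (mem_univ _)
  simp only [univ_inter] at hsplit
  rw [← hsplit]
  calc ENNReal.ofReal (circDist perim s t)
      ≤ ENNReal.ofReal (circDist perim s v + circDist perim v t) :=
        ENNReal.ofReal_le_ofReal (circDist_triangle hs hv ht)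
    _ = ENNReal.ofReal (circDist perim s v) + ENNReal.ofReal (circDist perim v t) :=
        ENNReal.ofReal_add (circDist_nonneg hs hv) (circDist_nonneg hv ht)
    _ ≤ _ := add_le_add
        (hsv har (hF.mono (Icc_subset_Icc_right hrb)) (hT.mono_left (Icc_subset_Icc_right hrb))
          hFa hFr)
        (hvt hrb (hF.mono (Icc_subset_Icc_left har)) (hT.mono_left (Icc_subset_Icc_left har))
          hFr hFb)

lemma of_separating {E U : Set ℂ} (hE : IsClosed E) (hU : IsClosed U) (hTri : Tri ⊆ E ∪ U)
    {v₁ v₂ : ℝ} (hEU : E ∩ U ⊆ {arcPoint v₁, arcPoint v₂})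
    (hcross : arcPoint s ∈ E ∧ arcPoint t ∈ U ∨ arcPoint s ∈ U ∧ arcPoint t ∈ E)
    (hs : s ∈ Icc 0 perim) (ht : t ∈ Icc 0 perim) (hv₁ : v₁ ∈ Icc 0 perim)
    (hv₂ : v₂ ∈ Icc 0 perim) (h₁ : LengthBound s v₁ ∧ LengthBound v₁ t)
    (h₂ : LengthBound s v₂ ∧ LengthBound v₂ t) : LengthBound s t := by
  intro F a b hab hF hT hFa hFb
  obtain ⟨r, hr, hrEU⟩ : ∃ r ∈ Icc a b, F r ∈ E ∩ U := by
    rcases hcross with ⟨hsE, htU⟩ | ⟨hsU, htE⟩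
    · exact exists_apply_mem_inter hE hU hab hF (hT.mono_right hTri) (hFa ▸ hsE) (hFb ▸ htU)
    · rw [inter_comm]
      exact exists_apply_mem_inter hU hE hab hF (hT.mono_right (union_comm E U ▸ hTri))
        (hFa ▸ hsU) (hFb ▸ htE)
  rcases hEU hrEU with hr₁ | hr₂
  · exact ofReal_circDist_le_of_apply_eq hs ht hv₁ h₁.1 h₁.2 hr hF hT hFa hr₁ hFb
  · exact ofReal_circDist_le_of_apply_eq hs ht hv₂ h₂.1 h₂.2 hr hF hT hFa hr₂ hFb

lemma of_bottomSide
    (hcross : arcPoint s ∈ bottomSide ∧ arcPoint t ∈ rightSide ∪ leftSide ∨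
      arcPoint s ∈ rightSide ∪ leftSide ∧ arcPoint t ∈ bottomSide)
    (hs : s ∈ Icc 0 perim) (ht : t ∈ Icc 0 perim) (h₀ : LengthBound s 0 ∧ LengthBound 0 t)
    (h₂ : LengthBound s 2 ∧ LengthBound 2 t) : LengthBound s t :=
  of_separating (isClosed_segment _ _) ((isClosed_segment _ _).union (isClosed_segment _ _))
    (union_assoc _ _ _).subset (by rw [arcPoint_zero, arcPoint_two]; exact bottomSide_inter_subset)
    hcross hs ht zero_mem_Icc_perim two_mem_Icc_perim h₀ h₂

lemma of_rightSide
    (hcross : arcPoint s ∈ rightSide ∧ arcPoint t ∈ bottomSide ∪ leftSide ∨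
      arcPoint s ∈ bottomSide ∪ leftSide ∧ arcPoint t ∈ rightSide)
    (hs : s ∈ Icc 0 perim) (ht : t ∈ Icc 0 perim) (h₂ : LengthBound s 2 ∧ LengthBound 2 t)
    (h₃ : LengthBound s (2 + √2) ∧ LengthBound (2 + √2) t) : LengthBound s t :=
  of_separating (isClosed_segment _ _) ((isClosed_segment _ _).union (isClosed_segment _ _))
    (by rw [tri_eq]; intro z; simp only [mem_union]; tauto)
    (by rw [arcPoint_two, arcPoint_two_add_sqrt_two]; exact rightSide_inter_subset)
    hcross hs ht two_mem_Icc_perim two_add_sqrt_two_mem_Icc_perim h₂ h₃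

lemma of_leftSide
    (hcross : arcPoint s ∈ leftSide ∧ arcPoint t ∈ bottomSide ∪ rightSide ∨
      arcPoint s ∈ bottomSide ∪ rightSide ∧ arcPoint t ∈ leftSide)
    (hs : s ∈ Icc 0 perim) (ht : t ∈ Icc 0 perim)
    (h₀ : LengthBound s perim ∧ LengthBound perim t)
    (h₃ : LengthBound s (2 + √2) ∧ LengthBound (2 + √2) t) : LengthBound s t :=
  of_separating (isClosed_segment _ _) ((isClosed_segment _ _).union (isClosed_segment _ _))
    (by rw [tri_eq]; intro z; simp only [mem_union]; tauto)
    (by rw [arcPoint_perim, arcPoint_two_add_sqrt_two]; exact leftSide_inter_subset)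
    hcross hs ht perim_mem_Icc_perim two_add_sqrt_two_mem_Icc_perim h₀ h₃

lemma zero_left (ht : t ∈ Icc 0 perim) : LengthBound 0 t := by
  have hp : perim = 2 + 2 * √2 := rfl
  have := one_lt_sqrt_two
  obtain ⟨ht₀, htp⟩ := ht
  rcases le_or_gt t 2 with h₂ | h₂
  · exact of_onCommonSide (Or.inl ⟨⟨le_rfl, zero_le_two⟩, ht₀, h₂⟩)
  rcases le_or_gt (2 + √2) t with h₃ | h₃
  · exact zero_left_of_perim_left ⟨ht₀, htp⟩ (of_onCommonSide (Or.inr (Or.inr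
      ⟨⟨by linarith, le_rfl⟩, h₃, htp⟩)))
  refine of_rightSide (Or.inr ⟨Or.inl (arcPoint_mem_bottomSide ⟨le_rfl, zero_le_two⟩),
    arcPoint_mem_rightSide ⟨h₂.le, h₃.le⟩⟩) zero_mem_Icc_perim ⟨ht₀, htp⟩ ⟨?_, ?_⟩ ⟨?_, ?_⟩
  · exact of_onCommonSide (Or.inl ⟨⟨le_rfl, zero_le_two⟩, zero_le_two, le_rfl⟩)
  · exact of_onCommonSide (Or.inr (Or.inl ⟨⟨le_rfl, by linarith⟩, h₂.le, h₃.le⟩))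
  · exact zero_left_of_perim_left two_add_sqrt_two_mem_Icc_perim (of_onCommonSide (Or.inr (Or.inr
      ⟨⟨by linarith, le_rfl⟩, le_rfl, by linarith⟩)))
  · exact of_onCommonSide (Or.inr (Or.inl ⟨⟨by linarith, le_rfl⟩, h₂.le, h₃.le⟩))

lemma two_left (ht : t ∈ Icc 0 perim) : LengthBound 2 t := by
  have hp : perim = 2 + 2 * √2 := rfl
  have := one_lt_sqrt_two
  obtain ⟨ht₀, htp⟩ := ht
  rcases le_or_gt t 2 with h₂ | h₂
  · exact of_onCommonSide (Or.inl ⟨⟨zero_le_two, le_rfl⟩, ht₀, h₂⟩)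
  rcases le_or_gt t (2 + √2) with h₃ | h₃
  · exact of_onCommonSide (Or.inr (Or.inl ⟨⟨le_rfl, by linarith⟩, h₂.le, h₃⟩))
  refine of_leftSide (Or.inr ⟨Or.inl (arcPoint_mem_bottomSide ⟨zero_le_two, le_rfl⟩),
    arcPoint_mem_leftSide ⟨h₃.le, htp⟩⟩) two_mem_Icc_perim ⟨ht₀, htp⟩ ⟨?_, ?_⟩ ⟨?_, ?_⟩
  · exact perim_right_of_zero_right two_mem_Icc_perim
      (of_onCommonSide (Or.inl ⟨⟨zero_le_two, le_rfl⟩, le_rfl, zero_le_two⟩))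
  · exact of_onCommonSide (Or.inr (Or.inr ⟨⟨by linarith, le_rfl⟩, h₃.le, htp⟩))
  · exact of_onCommonSide (Or.inr (Or.inl ⟨⟨le_rfl, by linarith⟩, by linarith, le_rfl⟩))
  · exact of_onCommonSide (Or.inr (Or.inr ⟨⟨le_rfl, by linarith⟩, h₃.le, htp⟩))

lemma two_add_sqrt_two_left (ht : t ∈ Icc 0 perim) : LengthBound (2 + √2) t := by
  have hp : perim = 2 + 2 * √2 := rfl
  have := one_lt_sqrt_two
  obtain ⟨ht₀, htp⟩ := ht
  rcases le_or_gt 2 t with h₂ | h₂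
  · rcases le_total t (2 + √2) with h₃ | h₃
    · exact of_onCommonSide (Or.inr (Or.inl ⟨⟨by linarith, le_rfl⟩, h₂, h₃⟩))
    · exact of_onCommonSide (Or.inr (Or.inr ⟨⟨le_rfl, by linarith⟩, h₃, htp⟩))
  refine of_bottomSide (Or.inr ⟨Or.inl (arcPoint_mem_rightSide ⟨by linarith, le_rfl⟩),
    arcPoint_mem_bottomSide ⟨ht₀, h₂.le⟩⟩) two_add_sqrt_two_mem_Icc_perim ⟨ht₀, htp⟩
    ⟨?_, ?_⟩ ⟨?_, ?_⟩
  · exact zero_right_of_perim_right two_add_sqrt_two_mem_Icc_perim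
      (of_onCommonSide (Or.inr (Or.inr ⟨⟨le_rfl, by linarith⟩, by linarith, le_rfl⟩)))
  · exact of_onCommonSide (Or.inl ⟨⟨le_rfl, zero_le_two⟩, ht₀, h₂.le⟩)
  · exact of_onCommonSide (Or.inr (Or.inl ⟨⟨by linarith, le_rfl⟩, le_rfl, by linarith⟩))
  · exact of_onCommonSide (Or.inl ⟨⟨zero_le_two, le_rfl⟩, ht₀, h₂.le⟩)

theorem of_mem_Icc (hs : s ∈ Icc 0 perim) (ht : t ∈ Icc 0 perim) : LengthBound s t := by
  have hp : perim = 2 + 2 * √2 := rfl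
  have := one_lt_sqrt_two
  rcases le_or_gt s 2 with hs₂ | hs₂
  · have hsB : s ∈ Icc 0 2 := ⟨hs.1, hs₂⟩
    rcases le_or_gt t 2 with ht₂ | ht₂
    · exact of_onCommonSide (Or.inl ⟨hsB, ht.1, ht₂⟩)
    refine of_bottomSide (Or.inl ⟨arcPoint_mem_bottomSide hsB, ?_⟩) hs ht
      ⟨of_onCommonSide (Or.inl ⟨hsB, le_rfl, zero_le_two⟩), zero_left ht⟩
      ⟨of_onCommonSide (Or.inl ⟨hsB, zero_le_two, le_rfl⟩), two_left ht⟩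
    rcases le_total t (2 + √2) with ht₃ | ht₃
    exacts [Or.inl (arcPoint_mem_rightSide ⟨ht₂.le, ht₃⟩),
      Or.inr (arcPoint_mem_leftSide ⟨ht₃, ht.2⟩)]
  rcases le_or_gt s (2 + √2) with hs₃ | hs₃
  · have hsR : s ∈ Icc 2 (2 + √2) := ⟨hs₂.le, hs₃⟩
    by_cases htR : t ∈ Icc 2 (2 + √2)
    · exact of_onCommonSide (Or.inr (Or.inl ⟨hsR, htR⟩))
    refine of_rightSide (Or.inl ⟨arcPoint_mem_rightSide hsR, ?_⟩) hs ht
      ⟨of_onCommonSide (Or.inr (Or.inl ⟨hsR, le_rfl, by linarith⟩)), two_left ht⟩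
      ⟨of_onCommonSide (Or.inr (Or.inl ⟨hsR, by linarith, le_rfl⟩)), two_add_sqrt_two_left ht⟩
    rw [mem_Icc, not_and_or, not_le, not_le] at htR
    rcases htR with ht₂ | ht₃
    exacts [Or.inl (arcPoint_mem_bottomSide ⟨ht.1, ht₂.le⟩),
      Or.inr (arcPoint_mem_leftSide ⟨ht₃.le, ht.2⟩)]
  have hsL : s ∈ Icc (2 + √2) perim := ⟨hs₃.le, hs.2⟩
  rcases le_or_gt (2 + √2) t with ht₃ | ht₃
  · exact of_onCommonSide (Or.inr (Or.inr ⟨hsL, ht₃, ht.2⟩))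
  refine of_leftSide (Or.inl ⟨arcPoint_mem_leftSide hsL, ?_⟩) hs ht
    ⟨of_onCommonSide (Or.inr (Or.inr ⟨hsL, by linarith, le_rfl⟩)),
      perim_left_of_zero_left ht (zero_left ht)⟩
    ⟨of_onCommonSide (Or.inr (Or.inr ⟨hsL, le_rfl, by linarith⟩)), two_add_sqrt_two_left ht⟩
  rcases le_total t 2 with ht₂ | ht₂
  exacts [Or.inl (arcPoint_mem_bottomSide ⟨ht.1, ht₂⟩),
    Or.inr (arcPoint_mem_rightSide ⟨ht₂, ht₃.le⟩)]

end LengthBound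

/-- `arcPoint` as a point of `Tri`; the parameter is clamped to `[0, perim]` to make it total. -/
def arcPt (t : ℝ) : Tri :=
  ⟨arcPoint (projIcc 0 perim (by linarith [four_lt_perim]) t), arcPoint_mem_tri (projIcc _ _ _ t).2⟩

lemma coe_arcPt {t : ℝ} (ht : t ∈ Icc 0 perim) : (arcPt t : ℂ) = arcPoint t := by
  simp [arcPt, projIcc_of_mem _ ht]

lemma exists_arcPt_eq (x : Tri) : ∃ t ∈ Icc 0 perim, arcPt t = x := by
  obtain ⟨t, ht, hx⟩ := exists_arcPoint_eq x.2
  exact ⟨t, ht, Subtype.ext ((coe_arcPt ht).trans hx)⟩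

lemma arcPt_zero : arcPt 0 = arcPt perim :=
  Subtype.ext (by rw [coe_arcPt zero_mem_Icc_perim, coe_arcPt perim_mem_Icc_perim, arcPoint_zero,
    arcPoint_perim])

lemma ofReal_circDist_le_netDist {s t : ℝ} (hs : s ∈ Icc 0 perim) (ht : t ∈ Icc 0 perim) :
    ENNReal.ofReal (circDist perim s t) ≤ netDist (arcPt s) (arcPt t) :=
  le_iInf fun γ => LengthBound.of_mem_Icc hs ht zero_le_one
    (continuous_subtype_val.comp γ.continuous_extend).continuousOn (fun r _ => (γ.extend r).2)
    (by simp [coe_arcPt hs]) (by simp [coe_arcPt ht])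

lemma netDist_le_abs_sub {s t : ℝ} (h : OnCommonSide s t) :
    netDist (arcPt s) (arcPt t) ≤ ENNReal.ofReal |s - t| := by
  obtain ⟨hs, ht⟩ := h.mem_Icc
  have hseg := segment_arcPoint_subset h
  rw [← coe_arcPt hs, ← coe_arcPt ht] at hseg
  refine (netDist_le_edist hseg).trans_eq ?_
  rw [edist_dist, coe_arcPt hs, coe_arcPt ht, dist_arcPoint h]

lemma netDist_le_sub_of_le_of_le {s m t : ℝ} (hsm : s ≤ m) (hmt : m ≤ t)
    (h₁ : netDist (arcPt s) (arcPt m) ≤ ENNReal.ofReal (m - s))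
    (h₂ : netDist (arcPt m) (arcPt t) ≤ ENNReal.ofReal (t - m)) :
    netDist (arcPt s) (arcPt t) ≤ ENNReal.ofReal (t - s) :=
  calc netDist (arcPt s) (arcPt t) ≤ netDist (arcPt s) (arcPt m) + netDist (arcPt m) (arcPt t) :=
        netDist_triangle _ _ _
    _ ≤ ENNReal.ofReal (m - s) + ENNReal.ofReal (t - m) := add_le_add h₁ h₂
    _ = ENNReal.ofReal (t - s) := by
        rw [← ENNReal.ofReal_add (by linarith) (by linarith), sub_add_sub_cancel']

lemma netDist_le_sub_of_onCommonSide {s t : ℝ} (h : OnCommonSide s t) (hst : s ≤ t) :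
    netDist (arcPt s) (arcPt t) ≤ ENNReal.ofReal (t - s) := by
  simpa [abs_sub_comm s t, abs_of_nonneg (sub_nonneg.2 hst)] using netDist_le_abs_sub h

lemma netDist_le_sub_of_two_le {s t : ℝ} (hs : 2 ≤ s) (hst : s ≤ t) (ht : t ≤ perim) :
    netDist (arcPt s) (arcPt t) ≤ ENNReal.ofReal (t - s) := by
  have hp : perim = 2 + 2 * √2 := rfl
  have := one_lt_sqrt_two
  rcases le_or_gt t (2 + √2) with ht₃ | ht₃
  · exact netDist_le_sub_of_onCommonSide (Or.inr (Or.inl ⟨⟨hs, by linarith⟩, by linarith, ht₃⟩))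
      hst
  rcases le_or_gt (2 + √2) s with hs₃ | hs₃
  · exact netDist_le_sub_of_onCommonSide (Or.inr (Or.inr ⟨⟨hs₃, by linarith⟩, by linarith, ht⟩))
      hst
  exact netDist_le_sub_of_le_of_le hs₃.le ht₃.le
    (netDist_le_sub_of_onCommonSide (Or.inr (Or.inl ⟨⟨hs, hs₃.le⟩, by linarith, le_rfl⟩))
      hs₃.le)
    (netDist_le_sub_of_onCommonSide (Or.inr (Or.inr ⟨⟨le_rfl, by linarith⟩, ht₃.le, ht⟩))
      ht₃.le)

lemma netDist_le_sub {s t : ℝ} (hs : 0 ≤ s) (hst : s ≤ t) (ht : t ≤ perim) :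
    netDist (arcPt s) (arcPt t) ≤ ENNReal.ofReal (t - s) := by
  rcases le_or_gt 2 s with hs₂ | hs₂
  · exact netDist_le_sub_of_two_le hs₂ hst ht
  rcases le_or_gt t 2 with ht₂ | ht₂
  · exact netDist_le_sub_of_onCommonSide (Or.inl ⟨⟨hs, hs₂.le⟩, by linarith, ht₂⟩) hst
  exact netDist_le_sub_of_le_of_le hs₂.le ht₂.le
    (netDist_le_sub_of_onCommonSide (Or.inl ⟨⟨hs, hs₂.le⟩, zero_le_two, le_rfl⟩) hs₂.le)
    (netDist_le_sub_of_two_le le_rfl ht₂.le ht)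

lemma netDist_le_ofReal_circDist_of_le {s t : ℝ} (hs : 0 ≤ s) (hst : s ≤ t) (ht : t ≤ perim) :
    netDist (arcPt s) (arcPt t) ≤ ENNReal.ofReal (circDist perim s t) := by
  rw [circDist, abs_sub_comm, abs_of_nonneg (sub_nonneg.2 hst), ENNReal.ofReal_min]
  refine le_min (netDist_le_sub hs hst ht) ?_
  calc netDist (arcPt s) (arcPt t)
      ≤ netDist (arcPt 0) (arcPt s) + netDist (arcPt perim) (arcPt t) := by
        rw [netDist_comm (arcPt 0), ← arcPt_zero]; exact netDist_triangle _ _ _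
    _ ≤ ENNReal.ofReal (s - 0) + ENNReal.ofReal (perim - t) := by
        rw [netDist_comm (arcPt perim)]
        exact add_le_add (netDist_le_sub le_rfl hs (hst.trans ht))
          (netDist_le_sub (hs.trans hst) ht le_rfl)
    _ = ENNReal.ofReal (perim - (t - s)) := by
        rw [← ENNReal.ofReal_add (by linarith) (by linarith)]; ring_nf

theorem netDist_arcPt {s t : ℝ} (hs : s ∈ Icc 0 perim) (ht : t ∈ Icc 0 perim) :
    netDist (arcPt s) (arcPt t) = ENNReal.ofReal (circDist perim s t) := by
  refine le_antisymm ?_ (ofReal_circDist_le_netDist hs ht)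
  rcases le_total s t with hst | hts
  · exact netDist_le_ofReal_circDist_of_le hs.1 hst ht.2
  · rw [netDist_comm, circDist_comm]
    exact netDist_le_ofReal_circDist_of_le ht.1 hts hs.2

lemma DelN.symm {X : Finset Tri} {p q : Tri} (h : DelN X p q) : DelN X q p := by
  rwa [DelN, inter_comm]

lemma delN_self (X : Finset Tri) (p : Tri) : DelN X p p :=
  ⟨p, fun _ _ => by simp [netDist_self], fun _ _ => by simp [netDist_self]⟩

lemma delN_arcPt_of_forall {X : Finset Tri} {v p q : ℝ} (hv : v ∈ Icc 0 perim)
    (hp : p ∈ Icc 0 perim) (hq : q ∈ Icc 0 perim)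
    (h : ∀ x ∈ X, ∃ r ∈ Icc 0 perim, x = arcPt r ∧
      circDist perim v p ≤ circDist perim v r ∧ circDist perim v q ≤ circDist perim v r) :
    DelN X (arcPt p) (arcPt q) := by
  refine ⟨arcPt v, fun x hx => ?_, fun x hx => ?_⟩ <;> obtain ⟨r, hr, rfl, hpr, hqr⟩ := h x hx <;>
    rw [netDist_arcPt hv hr, netDist_arcPt hv ‹_›] <;> exact ENNReal.ofReal_le_ofReal ‹_›

lemma circDist_le_of_mem_cellN {X : Finset Tri} {v p r : ℝ} (hv : v ∈ Icc 0 perim)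
    (hp : p ∈ Icc 0 perim) (hr : r ∈ Icc 0 perim) (hrX : arcPt r ∈ X)
    (h : arcPt v ∈ cellN X (arcPt p)) : circDist perim v p ≤ circDist perim v r := by
  have := h _ hrX
  rwa [netDist_arcPt hv hp, netDist_arcPt hv hr,
    ENNReal.ofReal_le_ofReal_iff (circDist_nonneg hv hr)] at this

lemma not_delN_arcPt_of_lt {X : Finset Tri} {p q r₁ r₂ : ℝ} (hp : p ∈ Icc 0 perim)
    (hq : q ∈ Icc 0 perim) (hr₁ : r₁ ∈ Icc 0 perim) (hr₂ : r₂ ∈ Icc 0 perim)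
    (hr₁X : arcPt r₁ ∈ X) (hr₂X : arcPt r₂ ∈ X)
    (h : ∀ v ∈ Icc 0 perim, min (circDist perim v r₁) (circDist perim v r₂) <
      max (circDist perim v p) (circDist perim v q)) :
    ¬ DelN X (arcPt p) (arcPt q) := by
  rintro ⟨ξ, hξp, hξq⟩
  obtain ⟨v, hv, rfl⟩ := exists_arcPt_eq ξ
  refine (h v hv).not_ge (max_le (le_min ?_ ?_) (le_min ?_ ?_)) <;>
    apply circDist_le_of_mem_cellN hv <;> assumption

theorem not_delN_of_cyclic {X : Finset Tri} {q₁ q₂ q₃ q₄ : ℝ} (h₀ : 0 ≤ q₁) (h₁₂ : q₁ < q₂)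
    (h₂₃ : q₂ < q₃) (h₃₄ : q₃ < q₄) (h₄ : q₄ ≤ perim) (hwrap : q₄ - q₁ < perim)
    (hX : {arcPt q₁, arcPt q₂, arcPt q₃, arcPt q₄} ⊆ X) :
    ¬ DelN X (arcPt q₁) (arcPt q₃) ∧ ¬ DelN X (arcPt q₂) (arcPt q₄) := by
  have m₁ : q₁ ∈ Icc 0 perim := ⟨h₀, by linarith⟩
  have m₂ : q₂ ∈ Icc 0 perim := ⟨by linarith, by linarith⟩
  have m₃ : q₃ ∈ Icc 0 perim := ⟨by linarith, by linarith⟩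
  have m₄ : q₄ ∈ Icc 0 perim := ⟨by linarith, h₄⟩
  simp only [Finset.insert_subset_iff, Finset.singleton_subset_iff] at hX
  exact ⟨not_delN_arcPt_of_lt m₁ m₃ m₂ m₄ hX.2.1 hX.2.2.2 fun v hv =>
      min_circDist_lt_max_circDist h₁₂ h₂₃ h₃₄ hwrap hv,
    not_delN_arcPt_of_lt m₂ m₄ m₁ m₃ hX.1 hX.2.2.1 fun v hv =>
      min_circDist_lt_max_circDist' h₁₂ h₂₃ h₃₄ hwrap hv⟩

theorem cliqueN_arcPt_three {q₁ q₂ q₃ : ℝ} (h₀ : 0 ≤ q₁) (h₁₂ : q₁ ≤ q₂) (h₂₃ : q₂ ≤ q₃)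
    (h₃ : q₃ ≤ perim) :
    CliqueN {arcPt q₁, arcPt q₂, arcPt q₃} {arcPt q₁, arcPt q₂, arcPt q₃} := by
  have m₁ : q₁ ∈ Icc 0 perim := ⟨h₀, by linarith⟩
  have m₂ : q₂ ∈ Icc 0 perim := ⟨by linarith, by linarith⟩
  have m₃ : q₃ ∈ Icc 0 perim := ⟨by linarith, h₃⟩
  have of_forall {p q : ℝ} (hp : p ∈ Icc 0 perim) (hq : q ∈ Icc 0 perim) (P : ℝ → Prop)
      (hP₁ : P q₁) (hP₂ : P q₂) (hP₃ : P q₃)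
      (hv : ∃ v ∈ Icc 0 perim, ∀ r ∈ Icc 0 perim, P r →
        circDist perim v p ≤ circDist perim v r ∧ circDist perim v q ≤ circDist perim v r) :
      DelN {arcPt q₁, arcPt q₂, arcPt q₃} (arcPt p) (arcPt q) := by
    obtain ⟨v, hv, hle⟩ := hv
    refine delN_arcPt_of_forall hv hp hq fun x hx => ?_
    simp only [Finset.mem_insert, Finset.mem_singleton] at hx
    rcases hx with rfl | rfl | rfl
    exacts [⟨q₁, m₁, rfl, hle q₁ m₁ hP₁⟩, ⟨q₂, m₂, rfl, hle q₂ m₂ hP₂⟩,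
      ⟨q₃, m₃, rfl, hle q₃ m₃ hP₃⟩]
  have d₁₂ := of_forall m₁ m₂ (· ∉ Ioo q₁ q₂) (fun h => h.1.false) (fun h => h.2.false)
    (fun h => h.2.not_ge h₂₃) (exists_circDist_le_of_notMem_Ioo h₀ h₁₂ (h₂₃.trans h₃))
  have d₂₃ := of_forall m₂ m₃ (· ∉ Ioo q₂ q₃) (fun h => h.1.not_ge h₁₂) (fun h => h.1.false)
    (fun h => h.2.false) (exists_circDist_le_of_notMem_Ioo (h₀.trans h₁₂) h₂₃ h₃)
  have d₁₃ := of_forall m₁ m₃ (· ∈ Icc q₁ q₃) ⟨le_rfl, h₁₂.trans h₂₃⟩ ⟨h₁₂, h₂₃⟩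
    ⟨h₁₂.trans h₂₃, le_rfl⟩
    (by
      obtain ⟨v, hv, hle⟩ := exists_circDist_le_of_mem_Icc h₀ (h₁₂.trans h₂₃) h₃
      exact ⟨v, hv, fun r _ hr => hle r hr⟩)
  intro x hx y hy
  simp only [Finset.mem_insert, Finset.mem_singleton] at hx hy
  rcases hx with rfl | rfl | rfl <;> rcases hy with rfl | rfl | rfl <;>
    first | exact delN_self _ _ | assumption | exact DelN.symm ‹_›

lemma arcPt_ne_arcPt {s t : ℝ} (hs : s ∈ Icc 0 perim) (ht : t ∈ Icc 0 perim)
    (h : 0 < circDist perim s t) : arcPt s ≠ arcPt t := by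
  intro hst
  have := netDist_arcPt hs ht
  rw [hst, netDist_self, eq_comm, ENNReal.ofReal_eq_zero] at this
  exact this.not_gt h

lemma card_arcPt_three {q₁ q₂ q₃ : ℝ} (h₀ : 0 ≤ q₁) (h₁₂ : q₁ < q₂) (h₂₃ : q₂ < q₃)
    (h₃ : q₃ ≤ perim) (hwrap : q₃ - q₁ < perim) :
    ({arcPt q₁, arcPt q₂, arcPt q₃} : Finset Tri).card = 3 := by
  have ne {p q : ℝ} (hp : 0 ≤ p) (hpq : p < q) (hq : q ≤ perim) (hlt : q - p < perim) :
      arcPt p ≠ arcPt q :=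
    arcPt_ne_arcPt ⟨hp, hpq.le.trans hq⟩ ⟨hp.trans hpq.le, hq⟩
      (circDist_pos hpq.ne (by rw [abs_sub_comm, abs_of_pos (sub_pos.2 hpq)]; exact hlt))
  exact Finset.card_eq_three.2 ⟨_, _, _, ne h₀ h₁₂ (h₂₃.le.trans h₃) (by linarith),
    ne h₀ (h₁₂.trans h₂₃) h₃ hwrap, ne (h₀.trans h₁₂.le) h₂₃ h₃ (by linarith), rfl⟩

theorem not_cliqueN_insert_arcPt {q₁ q₂ q₃ w : ℝ} (h₀ : 0 < q₁) (h₁₂ : q₁ < q₂) (h₂₃ : q₂ < q₃)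
    (h₃ : q₃ < perim) (hw : w ∈ Icc 0 perim) (hw₁ : w ≠ q₁) (hw₂ : w ≠ q₂) (hw₃ : w ≠ q₃) :
    ¬ CliqueN (insert (arcPt w) {arcPt q₁, arcPt q₂, arcPt q₃}) {arcPt q₁, arcPt q₂, arcPt q₃} ∧
      ∃ y ∈ ({arcPt q₁, arcPt q₂, arcPt q₃} : Finset Tri),
        ¬ DelN (insert (arcPt w) {arcPt q₁, arcPt q₂, arcPt q₃}) y (arcPt w) := by
  set X : Finset Tri := insert (arcPt w) {arcPt q₁, arcPt q₂, arcPt q₃} with hX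
  obtain ⟨hw₀, hwp⟩ := hw
  rcases hw₁.lt_or_gt with h₁ | h₁
  · obtain ⟨hw2, h13⟩ := not_delN_of_cyclic (X := X) hw₀ h₁ h₁₂ h₂₃ h₃.le (by linarith)
      subset_rfl
    exact ⟨fun hc => h13 (hc _ (by simp) _ (by simp)), _, by simp, fun h => hw2 h.symm⟩
  rcases hw₂.lt_or_gt with h₂ | h₂
  · obtain ⟨h12, hw3⟩ := not_delN_of_cyclic (X := X) h₀.le h₁ h₂ h₂₃ h₃.le (by linarith)
      (by intro x; simp [hX]; tauto)
    exact ⟨fun hc => h12 (hc _ (by simp) _ (by simp)), _, by simp, fun h => hw3 h.symm⟩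
  rcases hw₃.lt_or_gt with h₃' | h₃'
  · obtain ⟨h1w, h23⟩ := not_delN_of_cyclic (X := X) h₀.le h₁₂ h₂ h₃' h₃.le (by linarith)
      (by intro x; simp [hX]; tauto)
    exact ⟨fun hc => h23 (hc _ (by simp) _ (by simp)), _, by simp, h1w⟩
  · obtain ⟨h13, h2w⟩ := not_delN_of_cyclic (X := X) h₀.le h₁₂ h₂₃ h₃' hwp (by linarith)
      (by intro x; simp [hX]; tauto)
    exact ⟨fun hc => h13 (hc _ (by simp) _ (by simp)), _, by simp, h2w⟩

/-- There is a three-point configuration `z` on the triangle network, one point in the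
interior of each edge, which is a Delaunay clique in itself, but such that for every
additional point `u ∉ z` the set `z` is no longer a clique in `z ∪ {u}` even though
some point of `z` is not a Delaunay neighbour of `u` in `z ∪ {u}`: the
Baddeley–Møller condition (C1) fails on this network. -/
theorem triangle_C1_fails :
    ∃ z : Finset Tri, z.card = 3 ∧
      (∃ a b c : Tri, z = {a, b, c} ∧
        (a : ℂ) ∈ openSegment ℝ (-1 : ℂ) 1 ∧
        (b : ℂ) ∈ openSegment ℝ (1 : ℂ) Complex.I ∧
        (c : ℂ) ∈ openSegment ℝ (-1 : ℂ) Complex.I) ∧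
      CliqueN z z ∧
      ∀ u : Tri, u ∉ z →
        ¬ CliqueN (insert u z) z ∧ ∃ y ∈ z, ¬ DelN (insert u z) y u := by
  have hp : perim = 2 + 2 * √2 := rfl
  have := one_lt_sqrt_two
  have := sqrt_two_lt_three_halves
  have m₁ : (1 : ℝ) ∈ Icc 0 perim := ⟨zero_le_one, by linarith⟩
  have m₃ : (3 : ℝ) ∈ Icc 0 perim := ⟨by norm_num, by linarith⟩
  have m₄ : perim - 1 ∈ Icc 0 perim := ⟨by linarith, by linarith⟩
  refine ⟨{arcPt 1, arcPt 3, arcPt (perim - 1)},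
    card_arcPt_three zero_le_one (by norm_num) (by linarith) m₄.2 (by linarith),
    ⟨_, _, _, rfl, ?_, ?_, ?_⟩,
    cliqueN_arcPt_three zero_le_one (by norm_num) (by linarith) m₄.2, fun u hu => ?_⟩
  · rw [coe_arcPt m₁]; exact arcPoint_mem_openSegment_bottom ⟨by norm_num, by norm_num⟩
  · rw [coe_arcPt m₃]; exact arcPoint_mem_openSegment_right ⟨by norm_num, by linarith⟩
  · rw [coe_arcPt m₄]; exact arcPoint_mem_openSegment_left ⟨by linarith, by linarith⟩
  obtain ⟨w, hw, rfl⟩ := exists_arcPt_eq u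
  exact not_cliqueN_insert_arcPt one_pos (by norm_num) (by linarith) (by linarith) hw
    (by rintro rfl; simp at hu) (by rintro rfl; simp at hu) (by rintro rfl; simp at hu)

end
end

section
/- Conversely, let ∼_x be a family of symmetric reflexive relations satisfying (C1) with cliques of size at most 2, and let γ be a nonnegative interaction function. Then the function p(x) = 1{γ(x) > 0} · ∏_{xᵢ ∈ x} γ({xᵢ}) · ∏_{i<j, xᵢ ∼_x xⱼ} γ({xᵢ, xⱼ}) is a Markov function: p(x) > 0 implies p(y) > 0 for all y ⊆ x, and the ratio p(x ∪ {u})/p(x) depends only on u, on the neighbours of u in x ∪ {u}, and on the relations ∼_x and ∼_{x∪{u}} restricted to that neighbourhood. -/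
open scoped Classical

variable {L : Type*} [DecidableEq L]

/-- `y` is an `x`-clique for the family of relations `R`. -/
def CliqueFor (R : Finset L → L → L → Prop) (x y : Finset L) : Prop :=
  ∀ a ∈ y, ∀ b ∈ y, R x a b

/-- Clique indicator `χ(y | x)`. -/
noncomputable def chiFor (R : Finset L → L → L → Prop) (x y : Finset L) : ℕ :=
  if CliqueFor R x y then 1 else 0

/-- The neighbours of `u` in `x` with respect to the relation on `x ∪ {u}`. -/
noncomputable def nbhd (R : Finset L → L → L → Prop) (x : Finset L) (u : L) : Finset L :=
  x.filter fun a => R (insert u x) a u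

/-- `p` is a Markov function with respect to `R`: positivity is hereditary and the
ratio `p(x ∪ {u})/p(x)` depends only on `u`, on the neighbourhood of `u` in `x ∪ {u}`,
and on the relations `∼_x` and `∼_{x∪{u}}` restricted to that neighbourhood. -/
def IsMarkov (R : Finset L → L → L → Prop) (p : Finset L → ℝ) : Prop :=
  ∀ x : Finset L, 0 < p x →
    (∀ y ⊆ x, 0 < p y) ∧
    ∀ x' : Finset L, 0 < p x' → ∀ u : L, u ∉ x → u ∉ x' →
      nbhd R x u = nbhd R x' u →
      (∀ a ∈ insert u (nbhd R x u), ∀ b ∈ insert u (nbhd R x u),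
        (R x a b ↔ R x' a b) ∧ (R (insert u x) a b ↔ R (insert u x') a b)) →
      p (insert u x) * p x' = p (insert u x') * p x

/-- `γ` is a (nonnegative hereditary) interaction function for `R`. -/
def IsInteraction (R : Finset L → L → L → Prop) (γ : Finset L → ℝ) : Prop :=
  (∀ x, 0 ≤ γ x) ∧
  ∀ x : Finset L, 0 < γ x →
    (∀ y ⊆ x, 0 < γ y) ∧
    ∀ u : L, u ∉ x → 0 < γ (insert u (nbhd R x u)) → 0 < γ (insert u x)

/-- The Hammersley–Clifford product
`1{γ(x) > 0} ∏_{xᵢ ∈ x} γ({xᵢ}) ∏_{i<j, xᵢ ∼_x xⱼ} γ({xᵢ, xⱼ})`. -/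
noncomputable def hcProduct (R : Finset L → L → L → Prop) (γ : Finset L → ℝ)
    (x : Finset L) : ℝ :=
  (if 0 < γ x then (1 : ℝ) else 0) * (∏ a ∈ x, γ {a}) *
    ∏ s ∈ (x.powersetCard 2).filter (fun s => CliqueFor R x s), γ s

/-! ### Auxiliary lemmas -/

lemma hc_pos_iff {R : Finset L → L → L → Prop} {γ : Finset L → ℝ}
    (hγ : IsInteraction R γ) (x : Finset L) :
    0 < hcProduct R γ x ↔ 0 < γ x := by
  constructor
  · intro h
    by_contra h'
    simp [hcProduct, h'] at h
  · intro h
    have her := (hγ.2 x h).1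
    unfold hcProduct
    rw [if_pos h, one_mul]
    apply mul_pos
    · exact Finset.prod_pos fun a ha => her {a} (Finset.singleton_subset_iff.2 ha)
    · exact Finset.prod_pos fun s hs =>
        her s (Finset.mem_powersetCard.1 (Finset.mem_filter.1 hs).1).1

/-- Characterisation of pair cliques containing `u`. -/
lemma clique_pair_iff {R : Finset L → L → L → Prop}
    (hrefl : ∀ x : Finset L, ∀ a ∈ x, R x a a)
    (hsymm : ∀ x : Finset L, ∀ a ∈ x, ∀ b ∈ x, R x a b → R x b a)
    {x : Finset L} {u a : L} (ha : a ∈ x) :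
    CliqueFor R (insert u x) (insert u {a}) ↔ R (insert u x) a u := by
  constructor
  · intro h
    exact h a (by simp) u (by simp)
  · intro h c hc d hd
    have hu' : u ∈ insert u x := Finset.mem_insert_self u x
    have ha' : a ∈ insert u x := Finset.mem_insert_of_mem ha
    have hc' : c = u ∨ c = a := by simpa using hc
    have hd' : d = u ∨ d = a := by simpa using hd
    rcases hc' with h1 | h1 <;> rcases hd' with h2 | h2 <;> rw [h1, h2]
    · exact hrefl _ _ hu'
    · exact hsymm _ a ha' u hu' h
    · exact h
    · exact hrefl _ _ ha'

/-- Factorisation of the Hammersley–Clifford product after inserting a point. -/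
lemma hc_insert {R : Finset L → L → L → Prop} {γ : Finset L → ℝ}
    (hrefl : ∀ x : Finset L, ∀ a ∈ x, R x a a)
    (hsymm : ∀ x : Finset L, ∀ a ∈ x, ∀ b ∈ x, R x a b → R x b a)
    {x : Finset L} {u : L} (hu : u ∉ x) :
    hcProduct R γ (insert u x) =
      (if 0 < γ (insert u x) then (1 : ℝ) else 0) * (γ {u} * ∏ a ∈ x, γ {a}) *
      ((∏ a ∈ nbhd R x u, γ (insert u {a})) *
        ∏ s ∈ (x.powersetCard 2).filter (fun s => CliqueFor R (insert u x) s), γ s) := by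
  unfold hcProduct
  rw [Finset.prod_insert hu]
  congr 1
  have hsplit := Finset.powersetCard_succ_insert hu 1
  rw [hsplit, Finset.filter_union, Finset.prod_union]
  · rw [mul_comm]
    congr 1
    rw [Finset.prod_filter, Finset.prod_image, Finset.powersetCard_one, Finset.prod_map]
    · rw [← Finset.prod_filter]
      have : x.filter (fun a => CliqueFor R (insert u x) (insert u {a})) = nbhd R x u := by
        apply Finset.filter_congr
        intro a ha
        simpa using clique_pair_iff hrefl hsymm ha
      simp only [Function.Embedding.coeFn_mk] at this ⊢
      rw [this]
    · intro s hs t ht hst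
      have hus : u ∉ s := fun h => hu ((Finset.mem_powersetCard.1 hs).1 h)
      have hut : u ∉ t := fun h => hu ((Finset.mem_powersetCard.1 ht).1 h)
      have : (insert u s).erase u = (insert u t).erase u := by rw [hst]
      rwa [Finset.erase_insert hus, Finset.erase_insert hut] at this
  · rw [Finset.disjoint_left]
    intro s hs ht
    have hs1 := Finset.mem_filter.1 hs
    have ht1 := Finset.mem_filter.1 ht
    obtain ⟨t, _, rfl⟩ := Finset.mem_image.1 ht1.1
    exact hu ((Finset.mem_powersetCard.1 hs1.1).1 (Finset.mem_insert_self u t))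

/-- Splitting the pair product into pairs inside/not inside a subset `N`. -/
lemma hc_pair_split {γ : Finset L → ℝ} (P : Finset L → Prop)
    {z N : Finset L} (hNz : N ⊆ z) :
    ∏ s ∈ (z.powersetCard 2).filter P, γ s =
      (∏ s ∈ (N.powersetCard 2).filter P, γ s) *
      ∏ s ∈ (z.powersetCard 2).filter (fun s => P s ∧ ¬ s ⊆ N), γ s := by
  rw [← Finset.prod_filter_mul_prod_filter_not ((z.powersetCard 2).filter P)
      (fun s => s ⊆ N)]
  congr 1
  · apply Finset.prod_congr _ (fun _ _ => rfl)
    ext s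
    simp only [Finset.mem_filter, Finset.mem_powersetCard]
    constructor
    · rintro ⟨⟨⟨_, hc⟩, hP⟩, hsN⟩
      exact ⟨⟨hsN, hc⟩, hP⟩
    · rintro ⟨⟨hsN, hc⟩, hP⟩
      exact ⟨⟨⟨hsN.trans hNz, hc⟩, hP⟩, hsN⟩
  · apply Finset.prod_congr _ (fun _ _ => rfl)
    rw [Finset.filter_filter]

/-- Hammersley–Clifford theorem (sufficiency): for a symmetric reflexive family of
relations satisfying (C1) with cliques of size at most two, and a nonnegative
interaction function `γ`, the product function
`p(x) = 1{γ(x) > 0} ∏ γ({xᵢ}) ∏_{i<j, xᵢ∼xⱼ} γ({xᵢ,xⱼ})` is a Markov function. -/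
theorem hc_factorisation_is_markov
    (R : Finset L → L → L → Prop)
    (hrefl : ∀ x : Finset L, ∀ a ∈ x, R x a a)
    (hsymm : ∀ x : Finset L, ∀ a ∈ x, ∀ b ∈ x, R x a b → R x b a)
    (hclique2 : ∀ x : Finset L, ∀ y ⊆ x, CliqueFor R x y → y.card ≤ 2)
    (hC1 : ∀ (z : Finset L) (u : L), u ∉ z → ∀ y ⊆ z,
      chiFor R z y ≠ chiFor R (insert u z) y → y ⊆ nbhd R z u)
    (γ : Finset L → ℝ) (hγ : IsInteraction R γ) :
    IsMarkov R (hcProduct R γ) := by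
  intro x hpx
  have hγx : 0 < γ x := (hc_pos_iff hγ x).1 hpx
  refine ⟨fun y hy => (hc_pos_iff hγ y).2 ((hγ.2 x hγx).1 y hy), ?_⟩
  intro x' hpx' u hux hux' hN hrel
  have hγx' : 0 < γ x' := (hc_pos_iff hγ x').1 hpx'
  have hNx : nbhd R x u ⊆ x := Finset.filter_subset _ _
  have hNx' : nbhd R x u ⊆ x' := by
    rw [hN]; exact Finset.filter_subset _ _
  -- indicator equality
  have hI : (0 < γ (insert u x)) ↔ (0 < γ (insert u (nbhd R x u))) := by
    constructor
    · intro h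
      exact (hγ.2 (insert u x) h).1 _ (Finset.insert_subset_insert _ hNx)
    · intro h
      exact (hγ.2 x hγx).2 u hux h
  have hI' : (0 < γ (insert u x')) ↔ (0 < γ (insert u (nbhd R x u))) := by
    constructor
    · intro h
      exact (hγ.2 (insert u x') h).1 _ (Finset.insert_subset_insert _ hNx')
    · intro h
      have := (hγ.2 x' hγx').2 u hux'
      rw [← hN] at this
      exact this h
  -- relations agree on N
  have hrelN : ∀ a ∈ nbhd R x u, ∀ b ∈ nbhd R x u,
      (R x a b ↔ R x' a b) ∧ (R (insert u x) a b ↔ R (insert u x') a b) := by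
    intro a ha b hb
    exact hrel a (Finset.mem_insert_of_mem ha) b (Finset.mem_insert_of_mem hb)
  -- C1 consequence: away from N cliquehood is unchanged
  have hkey : ∀ z : Finset L, u ∉ z → ∀ s ⊆ z, ¬ s ⊆ nbhd R z u →
      (CliqueFor R (insert u z) s ↔ CliqueFor R z s) := by
    intro z huz s hs hn
    by_contra hne
    apply hn
    refine hC1 z u huz s hs ?_
    unfold chiFor
    split_ifs with h1 h2 h3
    · exact absurd (iff_of_true h2 h1) hne
    · simp
    · simp
    · exact absurd (iff_of_false h3 h1) hne
  -- away-from-N filters coincide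
  have hAx : (x.powersetCard 2).filter
        (fun s => CliqueFor R (insert u x) s ∧ ¬ s ⊆ nbhd R x u) =
      (x.powersetCard 2).filter (fun s => CliqueFor R x s ∧ ¬ s ⊆ nbhd R x u) := by
    apply Finset.filter_congr
    intro s hs
    have hsx : s ⊆ x := (Finset.mem_powersetCard.1 hs).1
    constructor
    · rintro ⟨hc, hn⟩
      exact ⟨(hkey x hux s hsx hn).1 hc, hn⟩
    · rintro ⟨hc, hn⟩
      exact ⟨(hkey x hux s hsx hn).2 hc, hn⟩
  have hAx' : (x'.powersetCard 2).filter
        (fun s => CliqueFor R (insert u x') s ∧ ¬ s ⊆ nbhd R x u) =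
      (x'.powersetCard 2).filter (fun s => CliqueFor R x' s ∧ ¬ s ⊆ nbhd R x u) := by
    apply Finset.filter_congr
    intro s hs
    have hsx : s ⊆ x' := (Finset.mem_powersetCard.1 hs).1
    constructor
    · rintro ⟨hc, hn⟩
      rw [hN] at hn
      exact ⟨(hkey x' hux' s hsx hn).1 hc, by rwa [← hN] at hn⟩
    · rintro ⟨hc, hn⟩
      rw [hN] at hn
      exact ⟨(hkey x' hux' s hsx hn).2 hc, by rwa [← hN] at hn⟩
  -- inside-N filters coincide between x and x'
  have hB : ((nbhd R x u).powersetCard 2).filter (fun s => CliqueFor R x' s) =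
      ((nbhd R x u).powersetCard 2).filter (fun s => CliqueFor R x s) := by
    apply Finset.filter_congr
    intro s hs
    have hsN : s ⊆ nbhd R x u := (Finset.mem_powersetCard.1 hs).1
    constructor
    · intro hc a ha b hb
      exact (hrelN a (hsN ha) b (hsN hb)).1.2 (hc a ha b hb)
    · intro hc a ha b hb
      exact (hrelN a (hsN ha) b (hsN hb)).1.1 (hc a ha b hb)
  have hD : ((nbhd R x u).powersetCard 2).filter (fun s => CliqueFor R (insert u x') s) =
      ((nbhd R x u).powersetCard 2).filter (fun s => CliqueFor R (insert u x) s) := by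
    apply Finset.filter_congr
    intro s hs
    have hsN : s ⊆ nbhd R x u := (Finset.mem_powersetCard.1 hs).1
    constructor
    · intro hc a ha b hb
      exact (hrelN a (hsN ha) b (hsN hb)).2.2 (hc a ha b hb)
    · intro hc a ha b hb
      exact (hrelN a (hsN ha) b (hsN hb)).2.1 (hc a ha b hb)
  have eq3 : hcProduct R γ x = (∏ a ∈ x, γ {a}) *
      ((∏ s ∈ ((nbhd R x u).powersetCard 2).filter (fun s => CliqueFor R x s), γ s) *
        ∏ s ∈ (x.powersetCard 2).filter (fun s => CliqueFor R x s ∧ ¬ s ⊆ nbhd R x u), γ s) := by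
    unfold hcProduct
    rw [if_pos hγx, one_mul, hc_pair_split (fun s => CliqueFor R x s) hNx]
  have eq4 : hcProduct R γ x' = (∏ a ∈ x', γ {a}) *
      ((∏ s ∈ ((nbhd R x u).powersetCard 2).filter (fun s => CliqueFor R x s), γ s) *
        ∏ s ∈ (x'.powersetCard 2).filter (fun s => CliqueFor R x' s ∧ ¬ s ⊆ nbhd R x u), γ s) := by
    unfold hcProduct
    rw [if_pos hγx', one_mul, hc_pair_split (fun s => CliqueFor R x' s) hNx', hB]
  have eq1 : hcProduct R γ (insert u x) =
      (if 0 < γ (insert u (nbhd R x u)) then (1 : ℝ) else 0) *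
        (γ {u} * ∏ a ∈ x, γ {a}) *
      ((∏ a ∈ nbhd R x u, γ (insert u {a})) *
        ((∏ s ∈ ((nbhd R x u).powersetCard 2).filter
            (fun s => CliqueFor R (insert u x) s), γ s) *
          ∏ s ∈ (x.powersetCard 2).filter
            (fun s => CliqueFor R x s ∧ ¬ s ⊆ nbhd R x u), γ s)) := by
    rw [hc_insert hrefl hsymm hux,
      hc_pair_split (fun s => CliqueFor R (insert u x) s) hNx, hAx,
      show (if 0 < γ (insert u x) then (1 : ℝ) else 0) =
        (if 0 < γ (insert u (nbhd R x u)) then (1 : ℝ) else 0) from if_congr hI rfl rfl]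
  have eq2 : hcProduct R γ (insert u x') =
      (if 0 < γ (insert u (nbhd R x u)) then (1 : ℝ) else 0) *
        (γ {u} * ∏ a ∈ x', γ {a}) *
      ((∏ a ∈ nbhd R x u, γ (insert u {a})) *
        ((∏ s ∈ ((nbhd R x u).powersetCard 2).filter
            (fun s => CliqueFor R (insert u x) s), γ s) *
          ∏ s ∈ (x'.powersetCard 2).filter
            (fun s => CliqueFor R x' s ∧ ¬ s ⊆ nbhd R x u), γ s)) := by
    rw [hc_insert hrefl hsymm hux', ← hN,
      hc_pair_split (fun s => CliqueFor R (insert u x') s) hNx', hD, hAx',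
      show (if 0 < γ (insert u x') then (1 : ℝ) else 0) =
        (if 0 < γ (insert u (nbhd R x u)) then (1 : ℝ) else 0) from if_congr hI' rfl rfl]
  rw [eq1, eq2, eq3, eq4]
  ring
end

section
/- For a finite set x of distinct points on the real line, the sequential-neighbour relation (y₁ ∼_x y₂ iff no point of x lies strictly between them) satisfies consistency condition (C2): for y ⊆ z ⊂ R finite and u, v ∉ z with u not a sequential neighbour of v in z ∪ {u, v}, one has χ(y | z ∪ {u}) + χ(y | z ∪ {v}) = χ(y | z) + χ(y | z ∪ {u, v}), where χ(y|x) = 1 iff all pairs of points of y are sequential neighbours in x. -/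
open scoped Classical

/-- Sequential-neighbour relation on the real line: no point of `x` lies strictly
between `a` and `b`. -/
def SeqNbr (x : Finset ℝ) (a b : ℝ) : Prop :=
  ∀ c ∈ x, ¬(min a b < c ∧ c < max a b)

/-- Clique indicator for the sequential-neighbour relation (equal to 1 for the
empty set and singletons). -/
noncomputable def chiSeq (x y : Finset ℝ) : ℕ :=
  if ∀ a ∈ y, ∀ b ∈ y, SeqNbr x a b then 1 else 0

lemma seqNbr_anti {x x' : Finset ℝ} (h : x ⊆ x') {a b : ℝ} (hs : SeqNbr x' a b) :
    SeqNbr x a b := fun c hc => hs c (h hc)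

lemma chiSeq_pos {x y : Finset ℝ} (h : ∀ a ∈ y, ∀ b ∈ y, SeqNbr x a b) :
    chiSeq x y = 1 := if_pos h

lemma chiSeq_neg {x y : Finset ℝ} (h : ¬ ∀ a ∈ y, ∀ b ∈ y, SeqNbr x a b) :
    chiSeq x y = 0 := if_neg h

/-- If a pair of points of `y` is blocked in `insert u z` but no pair is blocked in
`z`, then some pair of `y` straddles `u`. -/
lemma straddle {y z : Finset ℝ} {u : ℝ}
    (hK : ∀ a ∈ y, ∀ b ∈ y, SeqNbr z a b)
    (hnK : ¬ ∀ a ∈ y, ∀ b ∈ y, SeqNbr (insert u z) a b) :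
    ∃ p ∈ y, ∃ q ∈ y, p < u ∧ u < q := by
  push_neg at hnK
  obtain ⟨a, ha, b, hb, hab⟩ := hnK
  unfold SeqNbr at hab
  push_neg at hab
  obtain ⟨c, hc, h1, h2⟩ := hab
  rcases Finset.mem_insert.1 hc with hcu | hcz
  · subst hcu
    rcases le_total a b with h | h
    · refine ⟨a, ha, b, hb, ?_, ?_⟩
      · rw [min_eq_left h] at h1; exact h1
      · rw [max_eq_right h] at h2; exact h2
    · refine ⟨b, hb, a, ha, ?_, ?_⟩
      · rw [min_eq_right h] at h1; exact h1
      · rw [max_eq_left h] at h2; exact h2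
  · exact absurd ⟨h1, h2⟩ (hK a ha b hb c hcz)

/-- Consistency condition (C2) for the sequential-neighbour relation on ℝ: for
`y ⊆ z` and `u, v ∉ z` with `u` not a sequential neighbour of `v` in `z ∪ {u,v}`,
`χ(y | z∪{u}) + χ(y | z∪{v}) = χ(y | z) + χ(y | z∪{u,v})`. -/
theorem seqNbr_C2 (y z : Finset ℝ) (hyz : y ⊆ z) (u v : ℝ)
    (hu : u ∉ z) (hv : v ∉ z) (huv : u ≠ v)
    (hnn : ¬ SeqNbr (insert u (insert v z)) u v) :
    chiSeq (insert u z) y + chiSeq (insert v z) y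
      = chiSeq z y + chiSeq (insert u (insert v z)) y := by
  have hsub_u : z ⊆ insert u z := Finset.subset_insert _ _
  have hsub_v : z ⊆ insert v z := Finset.subset_insert _ _
  have hu_z : (∀ a ∈ y, ∀ b ∈ y, SeqNbr (insert u z) a b) →
      ∀ a ∈ y, ∀ b ∈ y, SeqNbr z a b :=
    fun h a ha b hb => seqNbr_anti hsub_u (h a ha b hb)
  have hv_z : (∀ a ∈ y, ∀ b ∈ y, SeqNbr (insert v z) a b) →
      ∀ a ∈ y, ∀ b ∈ y, SeqNbr z a b :=
    fun h a ha b hb => seqNbr_anti hsub_v (h a ha b hb)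
  have huv_u : (∀ a ∈ y, ∀ b ∈ y, SeqNbr (insert u (insert v z)) a b) →
      ∀ a ∈ y, ∀ b ∈ y, SeqNbr (insert u z) a b :=
    fun h a ha b hb =>
      seqNbr_anti (Finset.insert_subset_insert _ hsub_v) (h a ha b hb)
  have huv_v : (∀ a ∈ y, ∀ b ∈ y, SeqNbr (insert u (insert v z)) a b) →
      ∀ a ∈ y, ∀ b ∈ y, SeqNbr (insert v z) a b := by
    intro h a ha b hb
    refine seqNbr_anti (fun c hc => ?_) (h a ha b hb)
    rcases Finset.mem_insert.1 hc with rfl | hc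
    · exact Finset.mem_insert_of_mem (Finset.mem_insert_self _ _)
    · exact Finset.mem_insert_of_mem (Finset.mem_insert_of_mem hc)
  have huv_of : (∀ a ∈ y, ∀ b ∈ y, SeqNbr (insert u z) a b) →
      (∀ a ∈ y, ∀ b ∈ y, SeqNbr (insert v z) a b) →
      ∀ a ∈ y, ∀ b ∈ y, SeqNbr (insert u (insert v z)) a b := by
    intro h1 h2 a ha b hb c hc
    rcases Finset.mem_insert.1 hc with rfl | hc
    · exact h1 a ha b hb c (Finset.mem_insert_self _ _)
    · exact h2 a ha b hb c hc
  by_cases hz : ∀ a ∈ y, ∀ b ∈ y, SeqNbr z a b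
  · have key : (∀ a ∈ y, ∀ b ∈ y, SeqNbr (insert u z) a b) ∨
        ∀ a ∈ y, ∀ b ∈ y, SeqNbr (insert v z) a b := by
      by_contra h
      obtain ⟨hnu, hnv⟩ := not_or.mp h
      obtain ⟨p, hp, q, hq, hpu, huq⟩ := straddle hz hnu
      obtain ⟨p', hp', q', hq', hpv, hvq⟩ := straddle hz hnv
      unfold SeqNbr at hnn
      push_neg at hnn
      obtain ⟨c, hc, h1, h2⟩ := hnn
      have hcu : c ≠ u := by
        intro h
        rw [h] at h1 h2
        rcases le_total u v with hle | hle
        · rw [min_eq_left hle] at h1; linarith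
        · rw [max_eq_left hle] at h2; linarith
      have hcv : c ≠ v := by
        intro h
        rw [h] at h1 h2
        rcases le_total u v with hle | hle
        · rw [max_eq_right hle] at h2; linarith
        · rw [min_eq_right hle] at h1; linarith
      have hcz : c ∈ z := by
        rcases Finset.mem_insert.1 hc with h | h
        · exact absurd h hcu
        rcases Finset.mem_insert.1 h with h | h
        · exact absurd h hcv
        · exact h
      rcases le_total u v with hle | hle
      · rw [min_eq_left hle] at h1
        rw [max_eq_right hle] at h2
        -- p < u < c < v < q'
        have := hz p hp q' hq' c hcz
        rw [min_eq_left (show p ≤ q' by linarith),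
          max_eq_right (show p ≤ q' by linarith)] at this
        exact this ⟨by linarith, by linarith⟩
      · rw [min_eq_right hle] at h1
        rw [max_eq_left hle] at h2
        -- p' < v < c < u < q
        have := hz p' hp' q hq c hcz
        rw [min_eq_left (show p' ≤ q by linarith),
          max_eq_right (show p' ≤ q by linarith)] at this
        exact this ⟨by linarith, by linarith⟩
    by_cases h1 : ∀ a ∈ y, ∀ b ∈ y, SeqNbr (insert u z) a b <;>
      by_cases h2 : ∀ a ∈ y, ∀ b ∈ y, SeqNbr (insert v z) a b
    · rw [chiSeq_pos h1, chiSeq_pos h2, chiSeq_pos hz, chiSeq_pos (huv_of h1 h2)]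
    · rw [chiSeq_pos h1, chiSeq_neg h2, chiSeq_pos hz,
        chiSeq_neg (fun h => h2 (huv_v h))]
    · rw [chiSeq_neg h1, chiSeq_pos h2, chiSeq_pos hz,
        chiSeq_neg (fun h => h1 (huv_u h))]
    · exact absurd key (by tauto)
  · rw [chiSeq_neg hz, chiSeq_neg (fun h => hz (hu_z h)),
      chiSeq_neg (fun h => hz (hv_z h)), chiSeq_neg (fun h => hz (hu_z (huv_u h)))]
end
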